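/- arXiv:1008.4254 — 12 statements merged into one kernel-verified Lean document; each statement's English description precedes it below -/
import Mathlib

section
/- For a fixed x ∈ (0,1), the function a ↦ (1 + a·x)^(1/a) is decreasing on (1,∞). -/
/-!
Writing `(1 + a x)^(1/a) = exp (x · log y / (y - 1))` with `y = 1 + a x`, the claim reduces to the
fact that `log y / (y - 1)`, the slope of the concave function `log` between `1` and `y`, decreases
in `y`.
-/

open Real Set

lemma antitoneOn_log_div_sub_one : AntitoneOn (fun y : ℝ => log y / (y - 1)) (Ioi 1) := by
  have h := strictConcaveOn_log_Ioi.concaveOn.antitoneOn_slope_gt (mem_Ioi.2 one_pos)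
  intro y (hy : 1 < y) z (hz : 1 < z) hyz
  simpa [slope_def_field] using
    h ⟨zero_lt_one.trans hy, hy⟩ ⟨zero_lt_one.trans hz, hz⟩ hyz

lemma antitoneOn_one_add_mul_rpow_one_div {x : ℝ} (hx : 0 < x) :
    AntitoneOn (fun a : ℝ => (1 + a * x) ^ (1 / a)) (Ioi 0) := by
  have hlt : ∀ a ∈ Ioi (0 : ℝ), 1 < 1 + a * x := fun a ha => lt_add_of_pos_right 1 (mul_pos ha hx)
  have hexp : ∀ a ∈ Ioi (0 : ℝ),
      (1 + a * x) ^ (1 / a) = exp (x * (log (1 + a * x) / (1 + a * x - 1))) := fun a ha => by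
    rw [rpow_def_of_pos (zero_lt_one.trans (hlt a ha)), add_sub_cancel_left]
    field_simp [(mem_Ioi.1 ha).ne', hx.ne']
  intro a ha b hb hab
  simp only [hexp a ha, hexp b hb, exp_le_exp]
  exact mul_le_mul_of_nonneg_left
    (antitoneOn_log_div_sub_one (hlt a ha) (hlt b hb) (by gcongr)) hx.le

theorem stmt_3 (x : ℝ) (hx : x ∈ Set.Ioo (0:ℝ) 1) :
    AntitoneOn (fun a : ℝ => (1 + a * x) ^ (1 / a)) (Set.Ioi 1) :=
  (antitoneOn_one_add_mul_rpow_one_div hx.1).mono (Ioi_subset_Ioi zero_le_one)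
end

section
/- For a fixed x ∈ (0,1), the function a ↦ (log(1 + x^a))^(1/a) is increasing on (1,∞). -/
/-!
Write `t = x ^ a ∈ (0, 1]` and `L = log (1 + t)`. It suffices that `a⁻¹ * log L` increases in `a`;
since `a * d/da (x ^ a) = t * log t`, its derivative is
`(a ^ 2 * L)⁻¹ * (t / (1 + t) * log t - L * log L)`,
and `L * log L ≤ t / (1 + t) * log t` follows from `t / (1 + t) ≤ L ≤ t` together with
`log L ≤ log t ≤ 0`.
-/

open Real Set

lemma div_one_add_le_log_one_add {t : ℝ} (ht : -1 < t) : t / (1 + t) ≤ log (1 + t) := by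
  have h1t : 0 < 1 + t := by linarith
  calc t / (1 + t) = 1 - (1 + t)⁻¹ := by field_simp; ring
    _ ≤ log (1 + t) := one_sub_inv_le_log_of_pos h1t

lemma log_one_add_mul_log_log_one_add_le {t : ℝ} (ht0 : 0 < t) (ht1 : t ≤ 1) :
    log (1 + t) * log (log (1 + t)) ≤ t / (1 + t) * log t := by
  have hL_lower : t / (1 + t) ≤ log (1 + t) := div_one_add_le_log_one_add (by linarith)
  have hL_upper : log (1 + t) ≤ t := by linarith [log_le_sub_one_of_pos (by linarith : 0 < 1 + t)]
  have hL_pos : 0 < log (1 + t) := log_pos (by linarith)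
  have hlogL : log (log (1 + t)) ≤ log t := log_le_log hL_pos hL_upper
  have hlogt : log t ≤ 0 := log_nonpos ht0.le ht1
  calc log (1 + t) * log (log (1 + t)) ≤ t / (1 + t) * log (log (1 + t)) :=
        mul_le_mul_of_nonpos_right hL_lower (hlogL.trans hlogt)
    _ ≤ t / (1 + t) * log t := mul_le_mul_of_nonneg_left hlogL (by positivity)

lemma hasDerivAt_inv_mul_log_log_one_add_rpow {x a : ℝ} (hx : 0 < x) (ha : a ≠ 0) :
    HasDerivAt (fun b : ℝ => b⁻¹ * log (log (1 + x ^ b)))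
      (-(a ^ 2)⁻¹ * log (log (1 + x ^ a)) +
        a⁻¹ * (x ^ a * log x / (1 + x ^ a) / log (1 + x ^ a))) a := by
  have ht : 0 < x ^ a := rpow_pos_of_pos hx a
  have hpow : HasDerivAt (fun b : ℝ => 1 + x ^ b) (x ^ a * log x) a := by
    simpa using ((hasStrictDerivAt_const_rpow hx a).hasDerivAt).const_add 1
  have hlog := (hpow.log (by linarith)).log (log_pos (by linarith)).ne'
  exact (hasDerivAt_inv ha).mul hlog

lemma inv_mul_log_log_one_add_rpow_deriv_nonneg {x a : ℝ} (hx0 : 0 < x) (hx1 : x ≤ 1)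
    (ha : 0 < a) :
    0 ≤ -(a ^ 2)⁻¹ * log (log (1 + x ^ a)) +
      a⁻¹ * (x ^ a * log x / (1 + x ^ a) / log (1 + x ^ a)) := by
  set t := x ^ a
  have ht0 : 0 < t := rpow_pos_of_pos hx0 a
  have hL : 0 < log (1 + t) := log_pos (by linarith)
  have hlogt : log t = a * log x := log_rpow hx0 a
  have hkey := log_one_add_mul_log_log_one_add_le ht0 (rpow_le_one hx0.le hx1 ha.le)
  have expand : -(a ^ 2)⁻¹ * log (log (1 + t)) + a⁻¹ * (t * log x / (1 + t) / log (1 + t)) =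
      (a ^ 2 * log (1 + t))⁻¹ * (t / (1 + t) * log t - log (1 + t) * log (log (1 + t))) := by
    rw [hlogt]
    field_simp
    ring
  rw [expand]
  have : 0 ≤ t / (1 + t) * log t - log (1 + t) * log (log (1 + t)) := by linarith
  positivity

theorem monotoneOn_log_one_add_rpow_rpow_one_div {x : ℝ} (hx0 : 0 < x) (hx1 : x ≤ 1) :
    MonotoneOn (fun a : ℝ => log (1 + x ^ a) ^ (1 / a)) (Ioi 0) := by
  have hderiv := fun a (ha : a ∈ Ioi (0 : ℝ)) =>
    hasDerivAt_inv_mul_log_log_one_add_rpow hx0 (ne_of_gt ha)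
  have hmono : MonotoneOn (fun b : ℝ => b⁻¹ * log (log (1 + x ^ b))) (Ioi 0) := by
    refine monotoneOn_of_deriv_nonneg (convex_Ioi 0)
      (fun a ha => (hderiv a ha).continuousAt.continuousWithinAt) ?_ ?_ <;> rw [interior_Ioi]
    · exact fun a ha => (hderiv a ha).differentiableAt.differentiableWithinAt
    · intro a ha
      rw [(hderiv a ha).deriv]
      exact inv_mul_log_log_one_add_rpow_deriv_nonneg hx0 hx1 ha
  refine (exp_monotone.comp_monotoneOn hmono).congr fun a _ => ?_
  have hL : 0 < log (1 + x ^ a) := log_pos (by linarith [rpow_pos_of_pos hx0 a])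
  simp only [Function.comp, rpow_def_of_pos hL, one_div, mul_comm]

theorem stmt_4 (x : ℝ) (hx : x ∈ Set.Ioo (0:ℝ) 1) :
    MonotoneOn (fun a : ℝ => (Real.log (1 + x ^ a)) ^ (1 / a)) (Set.Ioi 1) :=
  (monotoneOn_log_one_add_rpow_rpow_one_div hx.1 hx.2.le).mono (Ioi_subset_Ioi zero_le_one)
end

section
/- For all x ≥ 0 and a ∈ [0,1], log(1 + x^a) ≤ max{log(1+x), (log(1+x))^a}. -/
/-!
For `x ≥ 1` we have `x ^ a ≤ x`, so the left side is at most `log (1 + x)`. On `[0, 1]` the gap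
`log (1 + t) ^ a - log (1 + t ^ a)` is nonnegative at `t = 0` (as `log (1 + u) ≤ u`) and
nondecreasing: its derivative is `a L ^ (a - 1) / (1 + t) - a t ^ (a - 1) / (1 + t ^ a)` with
`L = log (1 + t)`, and `L ≤ t`, `t ≤ t ^ a` make the first term dominate.
-/

open Set

namespace Real

lemma log_one_add_le_self {u : ℝ} (hu : -1 < u) : log (1 + u) ≤ u := by
  linarith [log_le_sub_one_of_pos (show 0 < 1 + u by linarith)]

noncomputable def logGap (a t : ℝ) : ℝ := log (1 + t) ^ a - log (1 + t ^ a)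

lemma continuousOn_logGap {a : ℝ} (ha : 0 ≤ a) : ContinuousOn (logGap a) (Ici 0) := by
  intro t ht
  have ht : 0 ≤ t := ht
  have hlog : ContinuousAt (fun t : ℝ => log (1 + t)) t :=
    (continuousAt_log (by linarith)).comp (by fun_prop)
  have hlogpow : ContinuousAt (fun t : ℝ => log (1 + t ^ a)) t :=
    (continuousAt_log (by positivity)).comp
      (continuousAt_const.add (continuous_rpow_const ha).continuousAt)
  exact ((hlog.rpow_const (Or.inr ha)).sub hlogpow).continuousWithinAt

lemma hasDerivAt_logGap (a : ℝ) {t : ℝ} (ht : 0 < t) :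
    HasDerivAt (logGap a)
      (a * log (1 + t) ^ (a - 1) / (1 + t) - a * t ^ (a - 1) / (1 + t ^ a)) t := by
  have hlog : HasDerivAt (fun t : ℝ => log (1 + t)) (1 / (1 + t)) t := by
    simpa using ((hasDerivAt_id t).const_add 1).log (by positivity)
  have hpow : HasDerivAt (fun t : ℝ => 1 + t ^ a) (a * t ^ (a - 1)) t :=
    (hasDerivAt_rpow_const (Or.inl ht.ne')).const_add 1
  have hlog_rpow := hlog.rpow_const (p := a) (Or.inl (log_pos (by linarith)).ne')
  exact (hlog_rpow.sub (hpow.log (by positivity))).congr_deriv (by ring)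

lemma deriv_logGap_nonneg {a t : ℝ} (ha : a ∈ Icc (0 : ℝ) 1) (ht : t ∈ Ioc (0 : ℝ) 1) :
    0 ≤ deriv (logGap a) t := by
  obtain ⟨ha0, ha1⟩ := ha
  obtain ⟨ht0, ht1⟩ := ht
  have hL : 0 < log (1 + t) := log_pos (by linarith)
  have hpow : t ^ (a - 1) ≤ log (1 + t) ^ (a - 1) :=
    rpow_le_rpow_of_nonpos hL (log_one_add_le_self (by linarith)) (by linarith)
  have hden : 1 + t ≤ 1 + t ^ a := by linarith [self_le_rpow_of_le_one ht0.le ht1 ha1]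
  rw [(hasDerivAt_logGap a ht0).deriv, sub_nonneg]
  exact div_le_div₀ (by positivity) (mul_le_mul_of_nonneg_left hpow ha0) (by positivity) hden

lemma monotoneOn_logGap {a : ℝ} (ha : a ∈ Icc (0 : ℝ) 1) : MonotoneOn (logGap a) (Icc 0 1) := by
  refine monotoneOn_of_deriv_nonneg (convex_Icc 0 1)
    ((continuousOn_logGap ha.1).mono Icc_subset_Ici_self) ?_ ?_ <;> rw [interior_Icc]
  · exact fun t ht => (hasDerivAt_logGap a ht.1).differentiableAt.differentiableWithinAt
  · exact fun t ht => deriv_logGap_nonneg ha (Ioo_subset_Ioc_self ht)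

lemma logGap_nonneg {a x : ℝ} (ha : a ∈ Icc (0 : ℝ) 1) (hx : x ∈ Icc (0 : ℝ) 1) :
    0 ≤ logGap a x := by
  have h0 : 0 ≤ logGap a 0 := by
    simpa [logGap, sub_nonneg] using
      log_one_add_le_self (by linarith [rpow_nonneg le_rfl a] : (-1 : ℝ) < 0 ^ a)
  exact h0.trans (monotoneOn_logGap ha (left_mem_Icc.2 zero_le_one) hx hx.1)

end Real

theorem stmt_5 (x a : ℝ) (hx : 0 ≤ x) (ha : a ∈ Set.Icc (0:ℝ) 1) :
    Real.log (1 + x ^ a) ≤ max (Real.log (1 + x)) ((Real.log (1 + x)) ^ a) := by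
  rcases le_total x 1 with hx1 | hx1
  · exact (sub_nonneg.1 (Real.logGap_nonneg ha ⟨hx, hx1⟩)).trans (le_max_right _ _)
  · refine (Real.log_le_log (by positivity) ?_).trans (le_max_left _ _)
    linarith [Real.rpow_le_self_of_one_le hx1 ha.2]
end

section
/- Let t0 = (e-1)/(e+1). The function g(K) = (t0^(1/K)·log(1/t0²)) / (K·(1 - t0^(2/K))) is monotone increasing on (1,∞), tending to 2·t0·log(t0)/(t0² - 1) as K → 1 and to 1 as K → ∞. -/
/-! With `c = -log t0 > 0` and `u = c / K`, one has `t0 ^ (1 / K) = exp (-u)` and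
`log (1 / t0 ^ 2) = 2 * u * K`, so `g K = u / sinh u`. Since `sinh` is convex on `[0, ∞)`,
`sinh u / u` is a secant slope through the origin and increases with `u`; hence `u / sinh u`
decreases in `u` and `g` increases in `K`. As `K → ∞`, `u → 0⁺` and `u / sinh u → 1`
(the derivative of `sinh` at `0`); as `K → 1`, continuity gives `g 1 = 2 t0 log t0 / (t0² - 1)`. -/

open Real Filter Set Topology

theorem convexOn_sinh_Ici : ConvexOn ℝ (Ici 0) sinh := by
  refine MonotoneOn.convexOn_of_deriv (convex_Ici 0) continuous_sinh.continuousOn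
    differentiable_sinh.differentiableOn ?_
  rw [Real.deriv_sinh, interior_Ici]
  intro x hx y hy hxy
  rw [cosh_le_cosh, abs_of_pos hx, abs_of_pos hy]
  exact hxy

theorem monotoneOn_sinh_div_self : MonotoneOn (fun x => sinh x / x) (Ioi 0) := by
  intro x hx y hy hxy
  simpa using convexOn_sinh_Ici.secant_mono self_mem_Ici (Ioi_subset_Ici_self hx)
    (Ioi_subset_Ici_self hy) hx.ne' hy.ne' hxy

theorem antitoneOn_self_div_sinh : AntitoneOn (fun x => x / sinh x) (Ioi 0) := by
  intro x hx y hy hxy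
  simp only [← inv_div (sinh _)]
  exact inv_anti₀ (div_pos (sinh_pos_iff.2 hx) hx) (monotoneOn_sinh_div_self hx hy hxy)

theorem tendsto_self_div_sinh_nhdsNE_zero : Tendsto (fun x => x / sinh x) (𝓝[≠] 0) (𝓝 1) := by
  have h := hasDerivAt_iff_tendsto_slope.mp (hasDerivAt_sinh 0)
  rw [cosh_zero, slope_fun_def_field] at h
  simpa using h.inv₀ one_ne_zero

theorem rpow_ratio_eq_self_div_sinh {t : ℝ} (ht : 0 < t) (K : ℝ) :
    t ^ (1 / K) * log (1 / t ^ 2) / (K * (1 - t ^ (2 / K)))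
      = (-log t / K) / sinh (-log t / K) := by
  rcases eq_or_ne K 0 with rfl | hK
  · simp
  set u := -log t / K
  have h1 : t ^ (1 / K) = exp (-u) := by
    rw [rpow_def_of_pos ht]; congr 1; simp only [u]; ring
  have h2 : t ^ (2 / K) = exp (-u) * exp (-u) := by
    rw [rpow_def_of_pos ht, ← exp_add]; congr 1; simp only [u]; ring
  have h3 : log (1 / t ^ 2) = 2 * u * K := by
    rw [one_div, log_inv, log_pow]; simp only [u]; field_simp; ring
  rw [h1, h2, h3, sinh_eq]
  have h4 : K * (1 - exp (-u) * exp (-u)) = exp (-u) * (K * (exp u - exp (-u))) := by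
    have he : exp u * exp (-u) = 1 := by rw [← exp_add, add_neg_cancel, exp_zero]
    linear_combination (-K) * he
  rw [h4, mul_div_mul_left _ _ (exp_ne_zero _), mul_comm K, mul_div_mul_right _ _ hK,
    div_div_eq_mul_div, mul_comm u]

theorem two_mul_mul_log_div_sq_sub_one_eq {t : ℝ} (ht : 0 < t) :
    2 * t * log t / (t ^ 2 - 1) = -log t / sinh (-log t) := by
  have h := rpow_ratio_eq_self_div_sinh ht 1
  simp only [div_one, rpow_one, one_mul] at h
  rw [rpow_two, one_div, log_inv, log_pow, ← neg_div_neg_eq] at h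
  rw [← h]
  push_cast
  ring

theorem monotoneOn_const_div_div_sinh {c : ℝ} (hc : 0 < c) :
    MonotoneOn (fun K => c / K / sinh (c / K)) (Ioi 0) := fun _ hK _ hL hKL =>
  antitoneOn_self_div_sinh (div_pos hc hL) (div_pos hc hK) (div_le_div_of_nonneg_left hc.le hK hKL)

theorem stmt_7 :
    let t0 : ℝ := (Real.exp 1 - 1) / (Real.exp 1 + 1)
    let g : ℝ → ℝ := fun K =>
      (t0 ^ (1 / K) * Real.log (1 / t0 ^ (2:ℕ))) / (K * (1 - t0 ^ (2 / K)))
    MonotoneOn g (Set.Ioi 1) ∧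
    Filter.Tendsto g (nhdsWithin 1 (Set.Ioi 1))
      (nhds (2 * t0 * Real.log t0 / (t0 ^ (2:ℕ) - 1))) ∧
    Filter.Tendsto g Filter.atTop (nhds 1) := by
  intro t0 g
  have he : 1 < exp 1 := one_lt_exp_iff.2 one_pos
  have ht0 : 0 < t0 := div_pos (by linarith) (by linarith)
  have ht1 : t0 < 1 := (div_lt_one (by linarith)).2 (by linarith)
  set c := -log t0
  have hc : 0 < c := neg_pos.2 (log_neg ht0 ht1)
  have hg : g = fun K => c / K / sinh (c / K) :=
    funext (rpow_ratio_eq_self_div_sinh ht0)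
  rw [hg, two_mul_mul_log_div_sq_sub_one_eq ht0]
  refine ⟨(monotoneOn_const_div_div_sinh hc).mono (Ioi_subset_Ioi zero_le_one), ?_, ?_⟩
  · have hcont : ContinuousAt (fun K => c / K / sinh (c / K)) 1 :=
      (continuousAt_id.div continuous_sinh.continuousAt (sinh_pos_iff.2 hc).ne').comp_of_eq
        (continuousAt_const.div continuousAt_id one_ne_zero) (div_one _)
    simpa only [div_one] using hcont.tendsto.mono_left nhdsWithin_le_nhds
  · have hzero : Tendsto (fun K => c / K) atTop (𝓝[≠] 0) :=
      tendsto_nhdsWithin_iff.2 ⟨tendsto_id.const_div_atTop _,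
        (eventually_gt_atTop 0).mono fun K hK => (div_pos hc hK).ne'⟩
    exact tendsto_self_div_sinh_nhdsNE_zero.comp hzero
end

section
/- For K ≥ 1 and t ∈ [t0, 1) with t0 = (e-1)/(e+1), log((1 + t^(1/K))/(1 - t^(1/K))) ≤ K·log((1+t)/(1-t)). -/
/-!
Write `F x = log ((1 + x) / (1 - x)) = 2 artanh x` and `u = F t ≥ 1`. The Möbius map
`x ↦ (1 - x) / (1 + x)` is an involution of `(0, 1)` conjugating `F` to `-log`, so
`F (exp (-u)) = -log t`, and the claim `F (t ^ (1 / K)) ≤ K u` becomes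
`K F (exp (-K u)) ≤ F (exp (-u))`. Since the power series of `F` has nonnegative coefficients,
`F (x) / x` increases on `[0, 1)`, which gives `K F (q) ≤ F (K q)`; and `K exp (-K u) ≤ exp (-u)`
because `K ≤ exp (K - 1) ≤ exp ((K - 1) u)` for `u ≥ 1`.
-/

open Real

lemma hasSum_log_one_add_div_one_sub {x : ℝ} (hx : |x| < 1) :
    HasSum (fun k : ℕ => 2 * (1 / (2 * k + 1)) * x ^ (2 * k + 1))
      (log ((1 + x) / (1 - x))) := by
  obtain ⟨hx₁, hx₂⟩ := abs_lt.1 hx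
  rw [log_div (by linarith) (by linarith)]
  exact hasSum_log_sub_log_of_abs_lt_one hx

lemma log_one_add_div_one_sub_le_of_le {x y : ℝ} (hx : -1 < x) (hxy : x ≤ y) (hy : y < 1) :
    log ((1 + x) / (1 - x)) ≤ log ((1 + y) / (1 - y)) :=
  log_le_log (div_pos (by linarith) (by linarith))
    (strictMonoOn_one_add_div_one_sub.monotoneOn ⟨hx, by linarith⟩ ⟨by linarith, hy⟩ hxy)

lemma mul_log_one_add_div_one_sub_le {p q : ℝ} (hp : 0 ≤ p) (hpq : p ≤ q) (hq : q < 1) :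
    q * log ((1 + p) / (1 - p)) ≤ p * log ((1 + q) / (1 - q)) := by
  have hq₀ : 0 ≤ q := hp.trans hpq
  refine hasSum_le (fun k => ?_)
    ((hasSum_log_one_add_div_one_sub (by rw [abs_of_nonneg hp]; linarith)).mul_left q)
    ((hasSum_log_one_add_div_one_sub (by rw [abs_of_nonneg hq₀]; linarith)).mul_left p)
  have hpow : p ^ (2 * k) ≤ q ^ (2 * k) := pow_le_pow_left₀ hp hpq _
  calc q * (2 * (1 / (2 * k + 1)) * p ^ (2 * k + 1))
      = 2 * (1 / (2 * k + 1)) * (p * q) * p ^ (2 * k) := by ring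
    _ ≤ 2 * (1 / (2 * k + 1)) * (p * q) * q ^ (2 * k) := by gcongr
    _ = p * (2 * (1 / (2 * k + 1)) * q ^ (2 * k + 1)) := by ring

lemma mul_log_one_add_div_one_sub_le_of_one_le {K p : ℝ} (hK : 1 ≤ K) (hp : 0 < p)
    (hKp : K * p < 1) :
    K * log ((1 + p) / (1 - p)) ≤ log ((1 + K * p) / (1 - K * p)) := by
  have h := mul_log_one_add_div_one_sub_le hp.le (le_mul_of_one_le_left hp.le hK) hKp
  rw [mul_assoc, mul_left_comm] at h
  exact le_of_mul_le_mul_left h hp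

lemma mul_exp_neg_mul_le_exp_neg {K u : ℝ} (hK : 1 ≤ K) (hu : 1 ≤ u) :
    K * exp (-(K * u)) ≤ exp (-u) := by
  have hK_le : K ≤ exp ((K - 1) * u) :=
    calc K ≤ exp (K - 1) := by linarith [add_one_le_exp (K - 1)]
      _ ≤ exp ((K - 1) * u) := exp_le_exp.2 (by nlinarith)
  calc K * exp (-(K * u)) ≤ exp ((K - 1) * u) * exp (-(K * u)) := by gcongr
    _ = exp (-u) := by rw [← exp_add]; ring_nf

lemma mul_log_one_add_div_one_sub_exp_neg_mul_le {K u : ℝ} (hK : 1 ≤ K) (hu : 1 ≤ u) :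
    K * log ((1 + exp (-(K * u))) / (1 - exp (-(K * u)))) ≤
      log ((1 + exp (-u)) / (1 - exp (-u))) := by
  have hKq := mul_exp_neg_mul_le_exp_neg hK hu
  have hq₁ : exp (-u) < 1 := exp_lt_one_iff.2 (by linarith)
  calc K * log ((1 + exp (-(K * u))) / (1 - exp (-(K * u))))
      ≤ log ((1 + K * exp (-(K * u))) / (1 - K * exp (-(K * u)))) :=
        mul_log_one_add_div_one_sub_le_of_one_le hK (exp_pos _) (hKq.trans_lt hq₁)
    _ ≤ log ((1 + exp (-u)) / (1 - exp (-u))) :=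
        log_one_add_div_one_sub_le_of_le
          (by linarith [mul_pos (by linarith : (0 : ℝ) < K) (exp_pos (-(K * u)))]) hKq hq₁

lemma log_one_add_div_one_sub_one_sub_div_one_add {x : ℝ} (hx : 0 < x) :
    log ((1 + (1 - x) / (1 + x)) / (1 - (1 - x) / (1 + x))) = -log x := by
  rw [← log_inv]
  congr 1
  field_simp
  rw [div_eq_one_iff_eq (by linarith)]
  ring

lemma log_one_add_div_one_sub_exp_neg_log {t : ℝ} (ht₀ : 0 < t) (ht₁ : t < 1) :
    log ((1 + exp (-log ((1 + t) / (1 - t)))) / (1 - exp (-log ((1 + t) / (1 - t))))) =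
      -log t := by
  rw [exp_neg, exp_log (div_pos (by linarith) (by linarith)), inv_div,
    log_one_add_div_one_sub_one_sub_div_one_add ht₀]

-- The inverse of `x ↦ log ((1 + x) / (1 - x))` sends `v` to `τ = (1 - exp (-v)) / (1 + exp (-v))`,
-- and `log τ = -log ((1 + exp (-v)) / (1 - exp (-v)))`.
lemma log_one_add_div_one_sub_le_of_log_le {s v : ℝ} (hs : 0 < s) (hv : 0 < v)
    (h : log s ≤ -log ((1 + exp (-v)) / (1 - exp (-v)))) :
    log ((1 + s) / (1 - s)) ≤ v := by
  have hq₁ : exp (-v) < 1 := exp_lt_one_iff.2 (by linarith)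
  set τ := (1 - exp (-v)) / (1 + exp (-v))
  have hτ₀ : 0 < τ := div_pos (by linarith) (by positivity)
  have hτ₁ : τ < 1 := (div_lt_one (by positivity)).2 (by linarith [exp_pos (-v)])
  have hlog_τ : log τ = -log ((1 + exp (-v)) / (1 - exp (-v))) := by rw [← log_inv, inv_div]
  have hsτ : s ≤ τ := by rwa [← log_le_log_iff hs hτ₀, hlog_τ]
  calc log ((1 + s) / (1 - s)) ≤ log ((1 + τ) / (1 - τ)) :=
        log_one_add_div_one_sub_le_of_le (by linarith) hsτ hτ₁
    _ = v := by rw [log_one_add_div_one_sub_one_sub_div_one_add (exp_pos _), log_exp, neg_neg]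

lemma log_le_log_one_add_div_one_sub {a t : ℝ} (ha : 0 < a) (ht₀ : (a - 1) / (a + 1) ≤ t)
    (ht₁ : t < 1) :
    log a ≤ log ((1 + t) / (1 - t)) := by
  have ha_eq : (1 + (a - 1) / (a + 1)) / (1 - (a - 1) / (a + 1)) = a := by
    field_simp
    ring
  have ha_gt : -1 < (a - 1) / (a + 1) := by
    rw [lt_div_iff₀ (by linarith)]
    linarith
  calc log a = log ((1 + (a - 1) / (a + 1)) / (1 - (a - 1) / (a + 1))) := by rw [ha_eq]
    _ ≤ log ((1 + t) / (1 - t)) := log_one_add_div_one_sub_le_of_le ha_gt ht₀ ht₁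

theorem stmt_8 (K t : ℝ) (hK : 1 ≤ K)
    (ht : t ∈ Set.Ico ((Real.exp 1 - 1) / (Real.exp 1 + 1)) 1) :
    Real.log ((1 + t ^ (1 / K)) / (1 - t ^ (1 / K))) ≤
      K * Real.log ((1 + t) / (1 - t)) := by
  obtain ⟨ht₀, ht₁⟩ := ht
  have hu : 1 ≤ log ((1 + t) / (1 - t)) := by
    simpa using log_le_log_one_add_div_one_sub (exp_pos 1) ht₀ ht₁
  have ht_pos : 0 < t :=
    (div_pos (sub_pos.2 (one_lt_exp_iff.2 one_pos)) (by positivity)).trans_le ht₀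
  have hkey := mul_log_one_add_div_one_sub_exp_neg_mul_le hK hu
  rw [log_one_add_div_one_sub_exp_neg_log ht_pos ht₁] at hkey
  refine log_one_add_div_one_sub_le_of_log_le (rpow_pos_of_pos ht_pos _)
    (mul_pos (by linarith) (by linarith)) ?_
  rw [log_rpow ht_pos, one_div_mul_eq_div, div_le_iff₀ (by linarith)]
  linarith
end

section
/- For K ≥ 1 and t ∈ (0, t0] with t0 = (e-1)/(e+1), log((1 + t^(1/K))/(1 - t^(1/K))) ≤ K·(log((1+t)/(1-t)))^(1/K). -/
/-!
Put `A = log ((1 + t) / (1 - t))`. The function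
`g σ = A ^ σ / σ - log ((1 + t ^ σ) / (1 - t ^ σ))` vanishes at `σ = 1`,
so it suffices that `g` is antitone on `(0, 1]`. With `A ^ σ = e^{-x}` and `t ^ σ = e^{-y}`,
the sign of `g'` is that of `2 σ y e^{-y} - e^{-x} (1 + x) (1 - e^{-2y})`.
The bound `t ≤ (e - 1)/(e + 1)` gives `A ≤ 1` (so `x ≥ 0`) and `log t ≤ -3/4` (so `y ≥ 3σ/4`),
and `A ≥ 2t` gives `x ≤ y - σ log 2`. As `e^{-x} (1 + x)` decreases, the worst case is
`x = y - σ log 2`, which after `2σ ≤ 2^σ` is the one-variable inequality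
`y ≤ (1 - e^{-2y}) (1 + y - σ log 2)`.
-/

open Real Set

lemma antitoneOn_exp_neg_mul_one_add : AntitoneOn (fun x => exp (-x) * (1 + x)) (Ici 0) := by
  intro a (ha : 0 ≤ a) b _ hab
  have hexp : exp (-a) = exp (-b) * exp (b - a) := by rw [← exp_add]; ring_nf
  have h1 : b - a + 1 ≤ exp (b - a) := add_one_le_exp _
  have h2 : 1 + b ≤ exp (b - a) * (1 + a) := by nlinarith
  simp only [hexp, mul_assoc]
  exact mul_le_mul_of_nonneg_left h2 (exp_pos _).le

lemma two_mul_le_two_rpow {s : ℝ} (hs : s ≤ 1) : 2 * s ≤ (2 : ℝ) ^ s := by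
  have hlog : log 2 < 1 := lt_trans log_two_lt_d9 (by norm_num)
  have h1 : (s - 1) * log 2 + 1 ≤ exp ((s - 1) * log 2) := add_one_le_exp _
  have h2 : (2 : ℝ) ^ s = 2 * exp ((s - 1) * log 2) := by
    rw [rpow_def_of_pos two_pos, show log 2 * s = log 2 + (s - 1) * log 2 by ring, exp_add,
      exp_log two_pos]
  nlinarith [log_pos one_lt_two]

-- `0.694 > log 2` and `0.925 > (4/3) log 2` bound `m = σ log 2` when `σ ≤ 1` and `y ≥ 3σ/4`.
lemma le_one_sub_exp_neg_two_mul_mul {y m : ℝ} (hy : 0 < y) (hm0 : 0 ≤ m) (hm1 : m ≤ 0.694)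
    (hm2 : m ≤ 0.925 * y) : y ≤ (1 - exp (-(2 * y))) * (1 + y - m) := by
  set P : ℝ := 1 + 2 * y + 2 * y ^ 2 + 4 / 3 * y ^ 3 + 2 / 3 * y ^ 4 with hP
  have hP0 : 0 < P := by positivity
  have hPexp : P ≤ exp (2 * y) := by
    have := sum_le_exp_of_nonneg (by positivity : (0 : ℝ) ≤ 2 * y) 5
    norm_num [Finset.sum_range_succ, Nat.factorial] at this
    linarith
  have hpoly : y * P ≤ (P - 1) * (1 + y - m) := by
    nlinarith [mul_nonneg (sub_nonneg.2 hm2) (by linarith : (0 : ℝ) ≤ 1 - m),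
      mul_nonneg hm0 (by linarith : (0 : ℝ) ≤ 0.694 - m),
      mul_nonneg (by linarith : (0 : ℝ) ≤ 1 - m) (sq_nonneg y),
      mul_nonneg (by linarith : (0 : ℝ) ≤ 1 - m) (mul_nonneg (sq_nonneg y) hy.le)]
  have hexp : exp (-(2 * y)) ≤ P⁻¹ := by
    rw [exp_neg]; exact inv_anti₀ hP0 hPexp
  calc y ≤ (1 - P⁻¹) * (1 + y - m) := by
        rw [show (1 - P⁻¹) * (1 + y - m) = (P - 1) * (1 + y - m) / P by field_simp,
          le_div_iff₀ hP0]
        exact hpoly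
    _ ≤ (1 - exp (-(2 * y))) * (1 + y - m) := by gcongr; linarith

lemma two_mul_mul_exp_neg_le {σ y x : ℝ} (hσ0 : 0 < σ) (hσ1 : σ ≤ 1)
    (hy : 3 / 4 * σ ≤ y) (hx0 : 0 ≤ x) (hx : x ≤ y - σ * log 2) :
    2 * σ * y * exp (-y) ≤ exp (-x) * (1 + x) * (1 - exp (-y) ^ 2) := by
  have hlog : log 2 < 0.6931472 := lt_trans log_two_lt_d9 (by norm_num)
  have hy0 : 0 < y := by linarith
  set m := σ * log 2
  have hm0 : 0 ≤ m := by positivity [log_pos one_lt_two]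
  have hexp : exp (-(y - m)) = exp (-y) * (2 : ℝ) ^ σ := by
    rw [rpow_def_of_pos two_pos, ← exp_add]; simp only [m]; ring_nf
  have hsq : exp (-y) ^ 2 = exp (-(2 * y)) := by rw [← exp_nat_mul]; ring_nf
  have hw : 0 ≤ 1 - exp (-y) ^ 2 := by
    rw [hsq, sub_nonneg, exp_le_one_iff]; linarith
  have hm1 : m ≤ 0.694 := by nlinarith [log_pos one_lt_two]
  have hm2 : m ≤ 0.925 * y := by nlinarith [mul_le_mul_of_nonneg_left hlog.le hσ0.le]
  have hym : 0 ≤ 1 + (y - m) := by nlinarith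
  have hdagger := le_one_sub_exp_neg_two_mul_mul hy0 hm0 hm1 hm2
  calc 2 * σ * y * exp (-y)
      ≤ 2 * σ * ((1 - exp (-y) ^ 2) * (1 + y - m)) * exp (-y) := by
        rw [hsq]; gcongr
    _ ≤ exp (-y) * (2 : ℝ) ^ σ * (1 + (y - m)) * (1 - exp (-y) ^ 2) := by
        rw [show 2 * σ * ((1 - exp (-y) ^ 2) * (1 + y - m)) * exp (-y) =
          exp (-y) * (2 * σ) * (1 + (y - m)) * (1 - exp (-y) ^ 2) by ring]
        gcongr
        exact two_mul_le_two_rpow hσ1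
    _ = exp (-(y - m)) * (1 + (y - m)) * (1 - exp (-y) ^ 2) := by rw [hexp]
    _ ≤ exp (-x) * (1 + x) * (1 - exp (-y) ^ 2) :=
        mul_le_mul_of_nonneg_right
          (antitoneOn_exp_neg_mul_one_add (mem_Ici.2 hx0) (mem_Ici.2 (by linarith)) hx) hw

lemma two_mul_le_log_one_add_div_one_sub {t : ℝ} (h0 : 0 ≤ t) (h1 : t < 1) :
    2 * t ≤ log ((1 + t) / (1 - t)) := by
  have hsum := hasSum_log_sub_log_of_abs_lt_one (abs_lt.2 ⟨by linarith, h1⟩)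
  rw [log_div (by linarith) (by linarith)]
  simpa using le_hasSum hsum 0 fun k _ => by positivity

lemma log_one_add_div_one_sub_le_one {t : ℝ} (h0 : 0 ≤ t)
    (ht : t ≤ (exp 1 - 1) / (exp 1 + 1)) : log ((1 + t) / (1 - t)) ≤ 1 := by
  have he : 0 < exp 1 + 1 := by positivity
  have ht1 : t < 1 := ht.trans_lt ((div_lt_one he).2 (by linarith))
  rw [le_div_iff₀ he] at ht
  rw [log_le_iff_le_exp (div_pos (by linarith) (by linarith)), div_le_iff₀ (by linarith)]
  linarith

lemma exp_three_quarters_lt : exp (3 / 4) < 2.12 := by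
  have := exp_bound' (x := 3 / 4) (by norm_num) (by norm_num) (n := 4) (by norm_num)
  norm_num [Finset.sum_range_succ, Nat.factorial] at this
  linarith

lemma log_le_neg_three_quarters {t : ℝ} (h0 : 0 < t)
    (ht : t ≤ (exp 1 - 1) / (exp 1 + 1)) : log t ≤ -(3 / 4) := by
  have he : 0 < exp 1 + 1 := by positivity
  rw [le_div_iff₀ he] at ht
  rw [log_le_iff_le_exp h0, exp_neg, ← one_div, le_div_iff₀ (exp_pos _)]
  have := exp_one_lt_d9
  have := exp_three_quarters_lt
  nlinarith [exp_pos (3 / 4 : ℝ)]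

lemma hasDerivAt_log_one_add_div_one_sub {u : ℝ} (hu : |u| < 1) :
    HasDerivAt (fun u => log ((1 + u) / (1 - u))) (2 / (1 - u ^ 2)) u := by
  obtain ⟨hu₀, hu₁⟩ := abs_lt.1 hu
  have h1 : 1 + u ≠ 0 := by linarith
  have h2 : 1 - u ≠ 0 := by linarith
  have := (((hasDerivAt_id u).const_add 1).div ((hasDerivAt_id u).const_sub 1) h2).log
    (div_ne_zero h1 h2)
  have h3 : 1 - u ^ 2 ≠ 0 := by nlinarith
  simp only [id, Pi.div_apply] at this
  convert this using 1
  field_simp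
  ring

lemma antitoneOn_rpow_div_sub_log {A t : ℝ} (hA0 : 0 < A) (hA1 : A ≤ 1) (ht0 : 0 < t)
    (htA : 2 * t ≤ A) (ht : log t ≤ -(3 / 4)) :
    AntitoneOn (fun σ => A ^ σ / σ - log ((1 + t ^ σ) / (1 - t ^ σ))) (Ioc 0 1) := by
  have ht1 : t < 1 := by
    rw [← log_neg_iff ht0]; linarith
  have hderiv : ∀ σ, 0 < σ →
      HasDerivAt (fun σ => A ^ σ / σ - log ((1 + t ^ σ) / (1 - t ^ σ)))
        ((A ^ σ * log A * σ - A ^ σ * 1) / σ ^ 2 -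
          2 / (1 - (t ^ σ) ^ 2) * (t ^ σ * log t)) σ := by
    intro σ hσ
    have hu : |t ^ σ| < 1 := by
      rw [abs_of_pos (rpow_pos_of_pos ht0 σ)]; exact rpow_lt_one ht0.le ht1 hσ
    exact ((hasStrictDerivAt_const_rpow hA0 σ).hasDerivAt.div (hasDerivAt_id σ) hσ.ne').sub
      ((hasDerivAt_log_one_add_div_one_sub hu).comp σ
        (hasStrictDerivAt_const_rpow ht0 σ).hasDerivAt)
  refine antitoneOn_of_hasDerivWithinAt_nonpos (convex_Ioc 0 1)
    (fun σ hσ => (hderiv σ hσ.1).continuousAt.continuousWithinAt)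
    (fun σ hσ => (hderiv σ (by simp_all)).hasDerivWithinAt) ?_
  intro σ hσ
  obtain ⟨hσ0, hσ1⟩ : 0 < σ ∧ σ < 1 := by simpa using hσ
  set x := -(log A * σ)
  set y := -(log t * σ)
  have hAx : A ^ σ = exp (-x) := by rw [rpow_def_of_pos hA0, neg_neg]
  have hty : t ^ σ = exp (-y) := by rw [rpow_def_of_pos ht0, neg_neg]
  have hlogA : log A = -x / σ := by field_simp [x]; ring
  have hlogt : log t = -y / σ := by field_simp [y]; ring
  have hlog2A : log 2 + log t ≤ log A := by
    rw [← log_mul two_ne_zero ht0.ne']; exact log_le_log (by positivity) htA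
  have key := two_mul_mul_exp_neg_le hσ0 hσ1.le (y := y) (x := x) (by nlinarith)
    (by nlinarith [log_nonpos hA0.le hA1]) (by nlinarith)
  have hw : 0 < 1 - exp (-y) ^ 2 := by
    have : exp (-y) < 1 := by rw [← hty]; exact rpow_lt_one ht0.le ht1 hσ0
    nlinarith [exp_pos (-y)]
  have hform : (exp (-x) * (-x / σ) * σ - exp (-x) * 1) / σ ^ 2 -
      2 / (1 - exp (-y) ^ 2) * (exp (-y) * (-y / σ)) =
      (2 * σ * y * exp (-y) - exp (-x) * (1 + x) * (1 - exp (-y) ^ 2)) /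
        (σ ^ 2 * (1 - exp (-y) ^ 2)) := by
    field_simp
    ring
  rw [hAx, hty, hlogA, hlogt, hform]
  exact div_nonpos_of_nonpos_of_nonneg (by linarith) (by positivity)

theorem stmt_9 (K t : ℝ) (hK : 1 ≤ K)
    (ht : t ∈ Set.Ioc 0 ((Real.exp 1 - 1) / (Real.exp 1 + 1))) :
    Real.log ((1 + t ^ (1 / K)) / (1 - t ^ (1 / K))) ≤
      K * (Real.log ((1 + t) / (1 - t))) ^ (1 / K) := by
  obtain ⟨ht0, htt0⟩ := ht
  have hlogt := log_le_neg_three_quarters ht0 htt0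
  have ht1 : t < 1 := by rw [← log_neg_iff ht0]; linarith
  have hA := two_mul_le_log_one_add_div_one_sub ht0.le ht1
  have hanti := antitoneOn_rpow_div_sub_log (by linarith)
    (log_one_add_div_one_sub_le_one ht0.le htt0) ht0 hA hlogt
  have hs : 1 / K ∈ Ioc 0 1 := ⟨by positivity, (div_le_one (by linarith)).2 hK⟩
  have hg := hanti hs ⟨one_pos, le_rfl⟩ hs.2
  simp only [rpow_one, div_one, sub_self] at hg
  rw [div_div_eq_mul_div, div_one, mul_comm] at hg
  linarith
end

section
/- For K ≥ 1 and t ∈ [0,1), log((1 + t^(1/K))/(1 - t^(1/K))) ≤ K·max{(log((1+t)/(1-t)))^(1/K), log((1+t)/(1-t))}. -/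
/-!
With `t = exp (-z)` both sides are expressed through `g z = log coth (z / 2)`, and the claim reads
`g (z / K) ≤ K * max (g z ^ (1 / K)) (g z)`. Since `g' = -1 / sinh ≥ -1 / z`, the function
`g z + log z` increases, so `g (z / K) ≤ g z + log K ≤ K * g z` once `g z ≥ 1` (as `log K ≤ K - 1`).
If `g z < 1`, then `z ≥ g 1` because `g` is a decreasing involution. As `sinh * g` increases,
`-(log g)' = 1 / (sinh * g)` decreases, so `log (g z) - K * log (g (z / K))` increases in `z`; at
`z = g 1` it is at least `-K * log K` by the first case, which gives `g (z / K) ≤ K * g z ^ (1 / K)`.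
-/

open Real Set

lemma monotoneOn_Ioi_of_hasDerivAt_nonneg {f f' : ℝ → ℝ} {c : ℝ}
    (hf : ∀ x ∈ Ioi c, HasDerivAt f (f' x) x) (hf' : ∀ x ∈ Ioi c, 0 ≤ f' x) :
    MonotoneOn f (Ioi c) := by
  refine monotoneOn_of_hasDerivWithinAt_nonneg (f' := f') (convex_Ioi c)
    (fun x hx ↦ (hf x hx).continuousAt.continuousWithinAt) (fun x hx ↦ ?_) (fun x hx ↦ ?_)
  · rw [interior_Ioi] at hx ⊢
    exact (hf x hx).hasDerivWithinAt
  · rw [interior_Ioi] at hx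
    exact hf' x hx

lemma two_mul_le_log_one_add_sub_log_one_sub {y : ℝ} (hy₀ : 0 ≤ y) (hy₁ : y < 1) :
    2 * y ≤ log (1 + y) - log (1 - y) := by
  have hsum := hasSum_log_sub_log_of_abs_lt_one (abs_lt.2 ⟨by linarith, hy₁⟩)
  simpa using le_hasSum hsum 0 fun k _ ↦ by positivity

noncomputable def logCothHalf (z : ℝ) : ℝ :=
  log (1 + exp (-z)) - log (1 - exp (-z))

lemma exp_neg_lt_one {z : ℝ} (hz : 0 < z) : exp (-z) < 1 :=
  exp_lt_one_iff.2 (neg_lt_zero.2 hz)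

lemma log_div_eq_logCothHalf {z : ℝ} (hz : 0 < z) :
    log ((1 + exp (-z)) / (1 - exp (-z))) = logCothHalf z :=
  log_div (by positivity) (by linarith [exp_neg_lt_one hz])

lemma two_mul_exp_neg_le_logCothHalf {z : ℝ} (hz : 0 < z) : 2 * exp (-z) ≤ logCothHalf z :=
  two_mul_le_log_one_add_sub_log_one_sub (exp_pos _).le (exp_neg_lt_one hz)

lemma logCothHalf_pos {z : ℝ} (hz : 0 < z) : 0 < logCothHalf z :=
  lt_of_lt_of_le (by positivity) (two_mul_exp_neg_le_logCothHalf hz)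

lemma logCothHalf_antitoneOn : AntitoneOn logCothHalf (Ioi 0) := by
  intro x hx y _ hxy
  have hexp : exp (-y) ≤ exp (-x) := exp_le_exp.2 (neg_le_neg hxy)
  have hx1 := exp_neg_lt_one hx
  have hy0 := exp_pos (-y)
  have h₁ : log (1 + exp (-y)) ≤ log (1 + exp (-x)) := log_le_log (by linarith) (by linarith)
  have h₂ : log (1 - exp (-x)) ≤ log (1 - exp (-y)) := log_le_log (by linarith) (by linarith)
  unfold logCothHalf
  linarith

lemma logCothHalf_logCothHalf {z : ℝ} (hz : 0 < z) : logCothHalf (logCothHalf z) = z := by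
  have h1 := exp_neg_lt_one hz
  have h0 := exp_pos (-z)
  have hexp : exp (-logCothHalf z) = (1 - exp (-z)) / (1 + exp (-z)) := by
    rw [← log_div_eq_logCothHalf hz, exp_neg, exp_log (div_pos (by linarith) (by linarith)),
      inv_div]
  rw [← log_div_eq_logCothHalf (logCothHalf_pos hz), hexp]
  have : (1 + (1 - exp (-z)) / (1 + exp (-z))) / (1 - (1 - exp (-z)) / (1 + exp (-z)))
      = exp z := by
    rw [exp_neg] at h0 ⊢
    field_simp
    ring
  rw [this, log_exp]

lemma hasDerivAt_logCothHalf {z : ℝ} (hz : 0 < z) :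
    HasDerivAt logCothHalf (-(sinh z)⁻¹) z := by
  have h1 := exp_neg_lt_one hz
  have h0 := exp_pos (-z)
  have hexp : HasDerivAt (fun z ↦ exp (-z)) (-exp (-z)) z := by
    simpa using (hasDerivAt_neg z).exp
  have hd := ((hexp.const_add 1).log (by linarith)).sub ((hexp.const_sub 1).log (by linarith))
  refine hd.congr_deriv ?_
  have hE : 1 < exp z := by linarith [add_one_le_exp z]
  have hE₁ : exp z - 1 ≠ 0 := by linarith
  have hE₂ : exp z ^ 2 - 1 ≠ 0 := by nlinarith
  rw [sinh_eq, exp_neg]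
  field_simp
  ring

lemma monotoneOn_logCothHalf_add_log : MonotoneOn (fun z ↦ logCothHalf z + log z) (Ioi 0) := by
  refine monotoneOn_Ioi_of_hasDerivAt_nonneg
    (fun z hz ↦ (hasDerivAt_logCothHalf hz).add (hasDerivAt_log (ne_of_gt hz))) fun z hz ↦ ?_
  have hsinh : z ≤ sinh z := self_le_sinh_iff.2 (le_of_lt hz)
  have : (sinh z)⁻¹ ≤ z⁻¹ := inv_anti₀ hz hsinh
  linarith

lemma logCothHalf_div_le_add_log {z K : ℝ} (hz : 0 < z) (hK : 1 ≤ K) :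
    logCothHalf (z / K) ≤ logCothHalf z + log K := by
  have hK₀ : 0 < K := by linarith
  have hzK : z / K ≤ z := div_le_self hz.le hK
  have : logCothHalf (z / K) + log (z / K) ≤ logCothHalf z + log z :=
    monotoneOn_logCothHalf_add_log (div_pos hz hK₀) hz hzK
  rw [log_div hz.ne' hK₀.ne'] at this
  linarith

lemma logCothHalf_div_le_mul {z K : ℝ} (hz : 0 < z) (hK : 1 ≤ K) (h : 1 ≤ logCothHalf z) :
    logCothHalf (z / K) ≤ K * logCothHalf z := by
  have hlog : log K ≤ K - 1 := log_le_sub_one_of_pos (by linarith)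
  nlinarith [logCothHalf_div_le_add_log hz hK]

lemma monotoneOn_sinh_mul_logCothHalf : MonotoneOn (fun z ↦ sinh z * logCothHalf z) (Ioi 0) := by
  refine monotoneOn_Ioi_of_hasDerivAt_nonneg
    (fun z hz ↦ (hasDerivAt_sinh z).mul (hasDerivAt_logCothHalf hz)) fun z hz ↦ ?_
  have hsinh : sinh z ≠ 0 := (sinh_pos_iff.2 hz).ne'
  have hg := two_mul_exp_neg_le_logCothHalf hz
  -- `cosh z * 2 * exp (-z) = 1 + exp (-2 * z)`
  have hcosh : 1 ≤ cosh z * (2 * exp (-z)) := by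
    rw [cosh_eq, exp_neg]
    have := exp_pos z
    field_simp
    nlinarith
  have := mul_le_mul_of_nonneg_left hg (cosh_pos z).le
  field_simp
  linarith

lemma monotoneOn_log_logCothHalf_sub_mul {K : ℝ} (hK : 1 ≤ K) :
    MonotoneOn (fun z ↦ log (logCothHalf z) - K * log (logCothHalf (z / K))) (Ioi 0) := by
  have hK₀ : 0 < K := by linarith
  refine monotoneOn_Ioi_of_hasDerivAt_nonneg
    (f' := fun z ↦ (sinh (z / K) * logCothHalf (z / K))⁻¹ - (sinh z * logCothHalf z)⁻¹)
    (fun z hz ↦ ?_) fun z hz ↦ ?_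
  · have hzK : 0 < z / K := div_pos hz hK₀
    have hdiv : HasDerivAt (fun z ↦ z / K) (1 / K) z := by
      simpa using (hasDerivAt_id z).div_const K
    have hcomp : HasDerivAt (fun z ↦ logCothHalf (z / K)) (-(sinh (z / K))⁻¹ * (1 / K)) z :=
      (hasDerivAt_logCothHalf hzK).comp (h₂ := logCothHalf) z hdiv
    refine (((hasDerivAt_logCothHalf hz).log (logCothHalf_pos hz).ne').sub
      ((hcomp.log (logCothHalf_pos hzK).ne').const_mul K)).congr_deriv ?_
    field_simp
    ring
  · have hzK : 0 < z / K := div_pos hz hK₀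
    have hmono := monotoneOn_sinh_mul_logCothHalf hzK hz (div_le_self hz.le hK)
    have : 0 < sinh (z / K) * logCothHalf (z / K) :=
      mul_pos (sinh_pos_iff.2 hzK) (logCothHalf_pos hzK)
    exact sub_nonneg.2 (inv_anti₀ this hmono)

lemma logCothHalf_div_le_mul_rpow {z K : ℝ} (hK : 1 ≤ K) (hz : logCothHalf 1 ≤ z) :
    logCothHalf (z / K) ≤ K * logCothHalf z ^ (1 / K) := by
  have hK₀ : 0 < K := by linarith
  have hz₁ : 0 < logCothHalf 1 := logCothHalf_pos one_pos
  have hz₀ : 0 < z := hz₁.trans_le hz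
  have hinv : logCothHalf (logCothHalf 1) = 1 := logCothHalf_logCothHalf one_pos
  have hstart : logCothHalf (logCothHalf 1 / K) ≤ K := by
    simpa [hinv] using logCothHalf_div_le_mul hz₁ hK hinv.ge
  have hmono := monotoneOn_log_logCothHalf_sub_mul hK hz₁ hz₀ hz
  simp only [hinv, log_one, zero_sub] at hmono
  have hlog : log (logCothHalf (logCothHalf 1 / K)) ≤ log K :=
    log_le_log (logCothHalf_pos (div_pos hz₁ hK₀)) hstart
  have hg₀ := logCothHalf_pos hz₀
  rw [← log_le_log_iff (logCothHalf_pos (div_pos hz₀ hK₀)) (by positivity),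
    log_mul hK₀.ne' (by positivity), log_rpow hg₀]
  rw [← mul_le_mul_iff_right₀ hK₀]
  field_simp
  nlinarith

theorem stmt_10 (K t : ℝ) (hK : 1 ≤ K) (ht : t ∈ Set.Ico (0:ℝ) 1) :
    Real.log ((1 + t ^ (1 / K)) / (1 - t ^ (1 / K))) ≤
      K * max ((Real.log ((1 + t) / (1 - t))) ^ (1 / K))
              (Real.log ((1 + t) / (1 - t))) := by
  obtain ⟨ht₀, ht₁⟩ := ht
  have hK₀ : 0 < K := by linarith
  rcases ht₀.eq_or_lt with rfl | ht₀
  · simp [zero_rpow (inv_pos.2 hK₀).ne']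
  set z := -log t
  have hz : 0 < z := neg_pos.2 (log_neg ht₀ ht₁)
  have htz : t = exp (-z) := by rw [neg_neg, exp_log ht₀]
  have hrpow : t ^ (1 / K) = exp (-(z / K)) := by
    rw [htz, ← exp_mul]; ring_nf
  rw [hrpow, htz, log_div_eq_logCothHalf hz, log_div_eq_logCothHalf (div_pos hz hK₀)]
  rcases le_or_gt 1 (logCothHalf z) with hbig | hsmall
  · calc logCothHalf (z / K) ≤ K * logCothHalf z := logCothHalf_div_le_mul hz hK hbig
      _ ≤ _ := by gcongr; exact le_max_right _ _
  · have hz₁ : logCothHalf 1 ≤ z := by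
      by_contra! h
      have := logCothHalf_antitoneOn hz (logCothHalf_pos one_pos) h.le
      rw [logCothHalf_logCothHalf one_pos] at this
      linarith
    calc logCothHalf (z / K) ≤ K * logCothHalf z ^ (1 / K) := logCothHalf_div_le_mul_rpow hK hz₁
      _ ≤ _ := by gcongr; exact le_max_left _ _
end

section
/- For p ∈ (0,1) and all x, y ∈ ℝⁿ, the p-angular distance satisfies ||x|^(p-1)·x - |y|^(p-1)·y| ≤ 2^(1-p)·|x-y|^p, with equality when x = -y. -/
/-! Scaling `x` to `‖x‖ ^ (p - 1) • x` replaces the lengths `a, b` of two vectors by `a ^ p, b ^ p`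
and keeps the angle between them, so by the law of cosines it suffices to show, for `κ ∈ [-1, 1]`,
`A² + B² - 2κAB ≤ 4 ^ (1 - p) (a² + b² - 2κab) ^ p` with `A = a ^ p`, `B = b ^ p`.
Write the left side as the convex combination `(1 - κ)/2 (A + B)² + (1 + κ)/2 (A - B)²`.
Concavity of `t ↦ t ^ p` gives `A + B ≤ 2 ^ (1 - p) (a + b) ^ p`, subadditivity gives
`|A - B| ≤ |a - b| ^ p`, and concavity once more moves the weights inside the power, where
`(1 - κ)/2 (a + b)² + (1 + κ)/2 (a - b)² = a² + b² - 2κab`. -/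

open Real InnerProductGeometry

namespace Real

variable {p a b : ℝ}

lemma rpow_add_rpow_le_two_rpow_mul_rpow_add (hp₀ : 0 ≤ p) (hp₁ : p ≤ 1) (ha : 0 ≤ a)
    (hb : 0 ≤ b) : a ^ p + b ^ p ≤ 2 ^ (1 - p) * (a + b) ^ p := by
  have hmid := (concaveOn_rpow hp₀ hp₁).2 (Set.mem_Ici.2 ha) (Set.mem_Ici.2 hb)
    (by norm_num : (0 : ℝ) ≤ 2⁻¹) (by norm_num : (0 : ℝ) ≤ 2⁻¹) (by norm_num)
  simp only [smul_eq_mul, ← mul_add] at hmid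
  rw [mul_rpow (by norm_num) (by positivity), inv_rpow zero_le_two] at hmid
  rw [rpow_sub two_pos, rpow_one, div_mul_eq_mul_div, le_div_iff₀ (by positivity)]
  have h2p : 0 < (2 : ℝ) ^ p := by positivity
  field_simp at hmid
  linarith

lemma abs_rpow_sub_rpow_le (hp₀ : 0 ≤ p) (hp₁ : p ≤ 1) (ha : 0 ≤ a) (hb : 0 ≤ b) :
    |a ^ p - b ^ p| ≤ |a - b| ^ p := by
  wlog hba : b ≤ a generalizing a b
  · rw [abs_sub_comm, abs_sub_comm a]
    exact this hb ha (le_of_not_ge hba)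
  have hsub := rpow_add_le_add_rpow (sub_nonneg.2 hba) hb hp₀ hp₁
  rw [sub_add_cancel] at hsub
  rw [abs_of_nonneg (sub_nonneg.2 hba), abs_of_nonneg (sub_nonneg.2 (rpow_le_rpow hb hba hp₀))]
  linarith

lemma sq_rpow_add_rpow_le (hp₀ : 0 ≤ p) (hp₁ : p ≤ 1) (ha : 0 ≤ a) (hb : 0 ≤ b) :
    (a ^ p + b ^ p) ^ 2 ≤ (2 ^ (1 - p)) ^ 2 * ((a + b) ^ 2) ^ p := by
  rw [← rpow_pow_comm (by positivity), ← mul_pow]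
  exact pow_le_pow_left₀ (by positivity) (rpow_add_rpow_le_two_rpow_mul_rpow_add hp₀ hp₁ ha hb) 2

lemma sq_rpow_sub_rpow_le (hp₀ : 0 ≤ p) (hp₁ : p ≤ 1) (ha : 0 ≤ a) (hb : 0 ≤ b) :
    (a ^ p - b ^ p) ^ 2 ≤ ((a - b) ^ 2) ^ p := by
  rw [← sq_abs (a - b), ← rpow_pow_comm (abs_nonneg _), ← sq_abs (a ^ p - b ^ p)]
  exact pow_le_pow_left₀ (abs_nonneg _) (abs_rpow_sub_rpow_le hp₀ hp₁ ha hb) 2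

lemma rpow_law_of_cosines_le {κ : ℝ} (hp₀ : 0 ≤ p) (hp₁ : p ≤ 1) (ha : 0 ≤ a) (hb : 0 ≤ b)
    (hκ : |κ| ≤ 1) :
    (a ^ p) ^ 2 + (b ^ p) ^ 2 - 2 * κ * (a ^ p * b ^ p)
      ≤ (2 ^ (1 - p)) ^ 2 * (a ^ 2 + b ^ 2 - 2 * κ * (a * b)) ^ p := by
  obtain ⟨hκ₁, hκ₂⟩ := abs_le.1 hκ
  have hw₁ : 0 ≤ (1 - κ) / 2 := by linarith
  have hw₂ : 0 ≤ (1 + κ) / 2 := by linarith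
  have hconc := (concaveOn_rpow hp₀ hp₁).2 (Set.mem_Ici.2 (sq_nonneg (a + b)))
    (Set.mem_Ici.2 (sq_nonneg (a - b))) hw₁ hw₂ (by ring)
  simp only [smul_eq_mul] at hconc
  have hfactor : 1 ≤ ((2 : ℝ) ^ (1 - p)) ^ 2 :=
    one_le_pow₀ (one_le_rpow one_le_two (by linarith))
  calc (a ^ p) ^ 2 + (b ^ p) ^ 2 - 2 * κ * (a ^ p * b ^ p)
      = (1 - κ) / 2 * (a ^ p + b ^ p) ^ 2 + (1 + κ) / 2 * (a ^ p - b ^ p) ^ 2 := by ring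
    _ ≤ (1 - κ) / 2 * ((2 ^ (1 - p)) ^ 2 * ((a + b) ^ 2) ^ p)
        + (1 + κ) / 2 * ((2 ^ (1 - p)) ^ 2 * ((a - b) ^ 2) ^ p) := by
      gcongr
      · exact sq_rpow_add_rpow_le hp₀ hp₁ ha hb
      · exact (sq_rpow_sub_rpow_le hp₀ hp₁ ha hb).trans
          (le_mul_of_one_le_left (by positivity) hfactor)
    _ = (2 ^ (1 - p)) ^ 2
          * ((1 - κ) / 2 * ((a + b) ^ 2) ^ p + (1 + κ) / 2 * ((a - b) ^ 2) ^ p) := by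
      ring
    _ ≤ (2 ^ (1 - p)) ^ 2 * ((1 - κ) / 2 * (a + b) ^ 2 + (1 + κ) / 2 * (a - b) ^ 2) ^ p := by
      gcongr
    _ = (2 ^ (1 - p)) ^ 2 * (a ^ 2 + b ^ 2 - 2 * κ * (a * b)) ^ p := by ring_nf

end Real

section InnerProductSpace

variable {E : Type*} [NormedAddCommGroup E] [InnerProductSpace ℝ E] {p : ℝ}

lemma norm_rpow_smul_self (hp : p ≠ 0) (x : E) : ‖‖x‖ ^ (p - 1) • x‖ = ‖x‖ ^ p := by
  rw [norm_smul, norm_of_nonneg (by positivity), ← rpow_add_one' (norm_nonneg x) (by simpa),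
    sub_add_cancel]

lemma angle_rpow_smul_self (x y : E) :
    angle (‖x‖ ^ (p - 1) • x) (‖y‖ ^ (p - 1) • y) = angle x y := by
  rcases eq_or_ne x 0 with rfl | hx
  · simp
  rcases eq_or_ne y 0 with rfl | hy
  · simp
  rw [angle_smul_left_of_pos _ _ (rpow_pos_of_pos (norm_pos_iff.2 hx) _),
    angle_smul_right_of_pos _ _ (rpow_pos_of_pos (norm_pos_iff.2 hy) _)]

theorem norm_rpow_smul_sub_rpow_smul_le (hp₀ : 0 < p) (hp₁ : p ≤ 1) (x y : E) :
    ‖‖x‖ ^ (p - 1) • x - ‖y‖ ^ (p - 1) • y‖ ≤ 2 ^ (1 - p) * ‖x - y‖ ^ p := by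
  have hlhs : ‖‖x‖ ^ (p - 1) • x - ‖y‖ ^ (p - 1) • y‖ ^ 2
      = (‖x‖ ^ p) ^ 2 + (‖y‖ ^ p) ^ 2 - 2 * cos (angle x y) * (‖x‖ ^ p * ‖y‖ ^ p) := by
    rw [sq, norm_sub_sq_eq_norm_sq_add_norm_sq_sub_two_mul_norm_mul_norm_mul_cos_angle,
      angle_rpow_smul_self, norm_rpow_smul_self hp₀.ne', norm_rpow_smul_self hp₀.ne']
    ring
  have hrhs : ‖x - y‖ ^ 2 = ‖x‖ ^ 2 + ‖y‖ ^ 2 - 2 * cos (angle x y) * (‖x‖ * ‖y‖) := by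
    rw [sq, norm_sub_sq_eq_norm_sq_add_norm_sq_sub_two_mul_norm_mul_norm_mul_cos_angle]
    ring
  have hsq := rpow_law_of_cosines_le hp₀.le hp₁ (norm_nonneg x) (norm_nonneg y)
    (abs_cos_le_one (angle x y))
  rw [← hlhs, ← hrhs, ← rpow_pow_comm (norm_nonneg _), ← mul_pow] at hsq
  exact (pow_le_pow_iff_left₀ (norm_nonneg _) (by positivity) two_ne_zero).1 hsq

theorem norm_rpow_smul_neg_sub_rpow_smul (hp : 0 < p) (y : E) :
    ‖‖-y‖ ^ (p - 1) • -y - ‖y‖ ^ (p - 1) • y‖ = 2 ^ (1 - p) * ‖-y - y‖ ^ p := by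
  have hlhs : ‖-y‖ ^ (p - 1) • -y - ‖y‖ ^ (p - 1) • y = (-2 : ℝ) • (‖y‖ ^ (p - 1) • y) := by
    rw [norm_neg]; module
  have hrhs : -y - y = (-2 : ℝ) • y := by module
  rw [hlhs, hrhs, norm_smul, norm_rpow_smul_self hp.ne', norm_smul,
    mul_rpow (norm_nonneg _) (norm_nonneg _), ← mul_assoc, norm_neg, norm_two,
    ← rpow_add two_pos, sub_add_cancel, rpow_one]

end InnerProductSpace

theorem stmt_11 (n : ℕ) (p : ℝ) (hp : p ∈ Set.Ioo (0:ℝ) 1)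
    (x y : EuclideanSpace ℝ (Fin n)) :
    ‖(‖x‖ ^ (p - 1)) • x - (‖y‖ ^ (p - 1)) • y‖ ≤ 2 ^ (1 - p) * ‖x - y‖ ^ p ∧
    (x = -y → ‖(‖x‖ ^ (p - 1)) • x - (‖y‖ ^ (p - 1)) • y‖ = 2 ^ (1 - p) * ‖x - y‖ ^ p) := by
  obtain ⟨hp₀, hp₁⟩ := hp
  refine ⟨norm_rpow_smul_sub_rpow_smul_le hp₀ hp₁.le x y, ?_⟩
  rintro rfl
  exact norm_rpow_smul_neg_sub_rpow_smul hp₀ y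
end

section
/- Let h(w) = r²·w/|w|² for r > 0 be inversion in the sphere of radius r. For all nonzero x, y ∈ ℝⁿ with |x| ≤ |y|, letting z = x·(|x| + |x-y|)/|x|, one has |h(x) - h(z)| ≤ |h(x) - h(y)| ≤ 3·|h(x) - h(z)|, with equality in the upper bound when x = -y. -/
/-!
Inversion scales distances: `|h(u) - h(v)| = r² |u - v| / (|u| |v|)`. The point `z` lies on the ray
through `x` with `|z| = |x| + |x - y|` and `|x - z| = |x - y|`, so with `a = |x|`, `b = |y|`,
`d = |x - y|` the three distances are `r² d / (a (a + d))` and `r² d / (a b)`, and the claim reduces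
to `b ≤ a + d ≤ 3 b`, i.e. the triangle inequality together with `a ≤ b`. For `x = -y` one has
`a + d = 3 b`.
-/

section Inversion

variable {E : Type*} [NormedAddCommGroup E] [InnerProductSpace ℝ E]

theorem norm_inversion_sub_inversion {u v : E} (hu : u ≠ 0) (hv : v ≠ 0) (r : ℝ) :
    ‖(r ^ 2 / ‖u‖ ^ 2) • u - (r ^ 2 / ‖v‖ ^ 2) • v‖ = r ^ 2 * ‖u - v‖ / (‖u‖ * ‖v‖) := by
  rw [← div_pow, ← div_pow, ← dist_eq_norm, dist_div_norm_sq_smul hu hv, dist_eq_norm]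
  ring

end Inversion

section RadialShift

variable {E : Type*} [NormedAddCommGroup E] [NormedSpace ℝ E] {x : E} {d : ℝ}

theorem norm_radialShift (hx : x ≠ 0) (hd : 0 ≤ d) :
    ‖((‖x‖ + d) / ‖x‖) • x‖ = ‖x‖ + d := by
  have hx' : 0 < ‖x‖ := norm_pos_iff.mpr hx
  rw [norm_smul, Real.norm_of_nonneg (by positivity), div_mul_cancel₀ _ hx'.ne']

theorem norm_sub_radialShift (hx : x ≠ 0) (hd : 0 ≤ d) :
    ‖x - ((‖x‖ + d) / ‖x‖) • x‖ = d := by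
  have hx' : 0 < ‖x‖ := norm_pos_iff.mpr hx
  rw [add_div, div_self hx'.ne', add_smul, one_smul, sub_add_cancel_left, norm_neg, norm_smul,
    Real.norm_of_nonneg (by positivity), div_mul_cancel₀ _ hx'.ne']

end RadialShift

theorem stmt_12_general (n : ℕ) (r : ℝ)
    (x y : EuclideanSpace ℝ (Fin n)) (hx : x ≠ 0) (hxy : ‖x‖ ≤ ‖y‖) :
    let h : EuclideanSpace ℝ (Fin n) → EuclideanSpace ℝ (Fin n) :=
      fun w => (r ^ 2 / ‖w‖ ^ 2) • w
    let z := ((‖x‖ + ‖x - y‖) / ‖x‖) • x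
    ‖h x - h z‖ ≤ ‖h x - h y‖ ∧ ‖h x - h y‖ ≤ 3 * ‖h x - h z‖ ∧
    (x = -y → ‖h x - h y‖ = 3 * ‖h x - h z‖) := by
  intro h z
  have ha : 0 < ‖x‖ := norm_pos_iff.mpr hx
  have hb : 0 < ‖y‖ := ha.trans_le hxy
  have hd : 0 ≤ ‖x - y‖ := norm_nonneg _
  have hz : z ≠ 0 := smul_ne_zero (by positivity) hx
  have hxz : ‖h x - h z‖ = r ^ 2 * ‖x - y‖ / (‖x‖ * (‖x‖ + ‖x - y‖)) := by
    rw [norm_inversion_sub_inversion hx hz, norm_radialShift hx hd, norm_sub_radialShift hx hd]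
  have hxy' : ‖h x - h y‖ = r ^ 2 * ‖x - y‖ / (‖x‖ * ‖y‖) :=
    norm_inversion_sub_inversion hx (norm_pos_iff.mp hb) r
  have hy_le : ‖y‖ ≤ ‖x‖ + ‖x - y‖ := norm_le_insert x y
  have h3 : ‖x‖ + ‖x - y‖ ≤ 3 * ‖y‖ := by linarith [norm_sub_le x y]
  have htriple : 3 * ‖h x - h z‖ = r ^ 2 * ‖x - y‖ / (‖x‖ * ((‖x‖ + ‖x - y‖) / 3)) := by
    rw [hxz]; field_simp
  refine ⟨?_, ?_, fun hneg => ?_⟩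
  · rw [hxz, hxy']; gcongr
  · rw [htriple, hxy']; gcongr; linarith
  · have hsum : ‖x‖ + ‖x - y‖ = 3 * ‖y‖ := by
      rw [hneg, sub_eq_add_neg, ← neg_add, norm_neg, norm_neg, ← two_smul ℝ, norm_smul]
      norm_num
      ring
    rw [htriple, hxy', hsum, mul_div_cancel_left₀ _ three_ne_zero]

theorem stmt_12 (n : ℕ) (r : ℝ) (hr : 0 < r)
    (x y : EuclideanSpace ℝ (Fin n)) (hx : x ≠ 0) (hy : y ≠ 0) (hxy : ‖x‖ ≤ ‖y‖) :
    let h : EuclideanSpace ℝ (Fin n) → EuclideanSpace ℝ (Fin n) :=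
      fun w => (r ^ 2 / ‖w‖ ^ 2) • w
    let z := ((‖x‖ + ‖x - y‖) / ‖x‖) • x
    ‖h x - h z‖ ≤ ‖h x - h y‖ ∧ ‖h x - h y‖ ≤ 3 * ‖h x - h z‖ ∧
    (x = -y → ‖h x - h y‖ = 3 * ‖h x - h z‖) :=
  stmt_12_general n r x y hx hxy
end

section
/- For 0 < a ≤ 1 ≤ p and 0 ≤ s ≤ 2π, with X = √(1 + p² - 2p·cos s), one has (1 + p^(2a) - 2·p^a·cos s)^(1/2)/((1+X)^a - 1) ≤ (1 + p^a)/((2+p)^a - 1). -/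
theorem stmt_14 (a p s : ℝ) (ha : 0 < a) (ha1 : a ≤ 1) (hp : 1 ≤ p)
    (hs : s ∈ Set.Icc 0 (2 * Real.pi)) :
    let X := Real.sqrt (1 + p ^ 2 - 2 * p * Real.cos s)
    (1 + p ^ (2 * a) - 2 * p ^ a * Real.cos s) ^ ((1:ℝ) / 2) / ((1 + X) ^ a - 1) ≤
      (1 + p ^ a) / ((2 + p) ^ a - 1) := by
  intro X
  set c := Real.cos s with hc
  have hc1 : c ≤ 1 := Real.cos_le_one s
  have hcm1 : -1 ≤ c := Real.neg_one_le_cos s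
  have hp0 : (0:ℝ) < p := by linarith
  set t := p ^ a with ht
  have ht1 : 1 ≤ t := Real.one_le_rpow hp ha.le
  have htp : t ≤ p := by
    calc t ≤ p ^ (1:ℝ) := Real.rpow_le_rpow_of_exponent_le hp ha1
    _ = p := Real.rpow_one p
  have h2a : p ^ (2 * a) = t ^ 2 := by
    rw [two_mul, Real.rpow_add hp0, ← ht]; exact (pow_two t).symm
  have hq0 : 0 ≤ 1 + p ^ (2 * a) - 2 * t * c := by
    rw [h2a]; nlinarith
  have hX0 : 0 ≤ 1 + p ^ 2 - 2 * p * c := by nlinarith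
  have hXnn : 0 ≤ X := Real.sqrt_nonneg _
  have hXsq : X ^ 2 = 1 + p ^ 2 - 2 * p * c := Real.sq_sqrt hX0
  have hXle : X ≤ 1 + p := by
    rw [show (1:ℝ) + p = Real.sqrt ((1 + p) ^ 2) from (Real.sqrt_sq (by linarith)).symm]
    apply Real.sqrt_le_sqrt; nlinarith
  set N := (1 + p ^ (2 * a) - 2 * p ^ a * c) ^ ((1:ℝ) / 2) with hN
  have hNnn : 0 ≤ N := Real.rpow_nonneg hq0 _
  have hNsq : N ^ 2 = 1 + t ^ 2 - 2 * t * c := by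
    rw [hN, ← Real.rpow_natCast _ 2, ← Real.rpow_mul hq0]
    norm_num
    rw [h2a]
  -- numerator bound: N * (1 + p) ≤ (1 + t) * X
  have hnum : N * (1 + p) ≤ (1 + t) * X := by
    have h1 : (N * (1 + p)) ^ 2 ≤ ((1 + t) * X) ^ 2 := by
      have key : (1 + p) ^ 2 * (1 + t ^ 2 - 2 * t * c) ≤ (1 + t) ^ 2 * (1 + p ^ 2 - 2 * p * c) := by
        nlinarith [mul_nonneg (mul_nonneg (by linarith : (0:ℝ) ≤ 1 + c)
          (by linarith : (0:ℝ) ≤ p - t)) (by nlinarith : (0:ℝ) ≤ p * t - 1)]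
      calc (N * (1 + p)) ^ 2 = (1 + p) ^ 2 * (1 + t ^ 2 - 2 * t * c) := by rw [mul_pow, hNsq]; ring
      _ ≤ (1 + t) ^ 2 * (1 + p ^ 2 - 2 * p * c) := key
      _ = ((1 + t) * X) ^ 2 := by rw [mul_pow, hXsq]
    exact (pow_le_pow_iff_left₀ (mul_nonneg hNnn (by linarith))
      (mul_nonneg (by linarith) hXnn) two_ne_zero).mp h1
  -- denominator bound via concavity
  have hC : 0 < (2 + p) ^ a - 1 := by
    have : (1:ℝ) < (2 + p) ^ a := Real.one_lt_rpow_iff_of_pos (by linarith) |>.2 (Or.inl ⟨by linarith, ha⟩)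
    linarith
  have hden : X / (1 + p) * ((2 + p) ^ a - 1) ≤ (1 + X) ^ a - 1 := by
    set l := X / (1 + p) with hl
    have hl0 : 0 ≤ l := div_nonneg hXnn (by linarith)
    have hl1 : l ≤ 1 := (div_le_one (by linarith)).2 hXle
    have hcon := (Real.concaveOn_rpow ha.le ha1).2 (Set.mem_Ici.2 (by norm_num : (0:ℝ) ≤ 1))
      (Set.mem_Ici.2 (by linarith : (0:ℝ) ≤ 2 + p)) (by linarith : 0 ≤ 1 - l) hl0 (by ring)
    have hx : (1 - l) • (1:ℝ) + l • (2 + p) = 1 + X := by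
      simp only [smul_eq_mul, hl]
      field_simp
      ring
    rw [hx] at hcon
    simp only [smul_eq_mul, Real.one_rpow] at hcon
    nlinarith
  -- combine
  rcases eq_or_lt_of_le hXnn with hX | hX
  · have hN0 : N = 0 := by nlinarith
    rw [hN0, zero_div]
    positivity
  · have hD : 0 < (1 + X) ^ a - 1 := by
      have : 0 < X / (1 + p) * ((2 + p) ^ a - 1) :=
        mul_pos (div_pos hX (by linarith)) hC
      linarith
    rw [div_le_div_iff₀ hD hC]
    calc N * ((2 + p) ^ a - 1) ≤ (1 + t) * X / (1 + p) * ((2 + p) ^ a - 1) := by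
          apply mul_le_mul_of_nonneg_right _ hC.le
          rw [le_div_iff₀ (by linarith : (0:ℝ) < 1 + p)]
          exact hnum
      _ = (1 + t) * (X / (1 + p) * ((2 + p) ^ a - 1)) := by ring
      _ ≤ (1 + t) * ((1 + X) ^ a - 1) := by
          apply mul_le_mul_of_nonneg_left hden (by linarith)
end

section
/- For 0 < a ≤ 1 ≤ b, let 𝒜(x) = |x|^(a-1)·x if |x| ≤ 1 and 𝒜(x) = |x|^(b-1)·x if |x| > 1. For nonzero x, y ∈ ℝⁿ with |x| ≤ |y| and x ≠ y, let z = (x/|x|)·(|x| + |x-y|). Then |𝒜(x) - 𝒜(y)| ≤ (2/(3^a - 1))·|𝒜(x) - 𝒜(z)|, and the constant 2/(3^a - 1) is sharp: the supremum of the ratio |𝒜(x)-𝒜(y)|/|𝒜(x)-𝒜(z)| over such pairs equals 2/(3^a - 1). -/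
/-!
Write `𝒜 = P ∘ G`, where `P x = ‖x‖ ^ (a - 1) • x` is the pure power map and `G` is the radial
stretch `x ↦ (g ‖x‖ / ‖x‖) • x` with profile `g r = r` for `r ≤ 1`, `g r = r ^ (b / a)` for `r > 1`;
the slope `g r / r` is nondecreasing. The identity
`‖α • x - β • y‖² = (α ‖x‖ - β ‖y‖)² + α β (‖x - y‖² - (‖x‖ - ‖y‖)²)` turns every estimate into a
scalar one. The monotone slope gives `‖G x‖ + ‖G x - G y‖ ≤ g (‖x‖ + ‖x - y‖)`, so it suffices to
prove the estimate for `P`. Normalised by `‖Y‖ = 1` this is a two-variable inequality, which follows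
from the concavity of `t ↦ t ^ a`, Bernoulli's inequality and an explicit polynomial certificate.
Equality holds for `y = -x`, `‖x‖ = 1 / 3`.
-/

/-- The two-exponent radial stretch map `𝒜_{a,b}`. -/
noncomputable def radialA (n : ℕ) (a b : ℝ) (x : EuclideanSpace ℝ (Fin n)) :
    EuclideanSpace ℝ (Fin n) :=
  if ‖x‖ ≤ 1 then (‖x‖ ^ (a - 1)) • x else (‖x‖ ^ (b - 1)) • x

open Real Set

lemma three_rpow_sub_one_le {a : ℝ} (ha : 0 ≤ a) (ha1 : a ≤ 1) : (3 : ℝ) ^ a - 1 ≤ 2 * a := by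
  have := rpow_one_add_le_one_add_mul_self (s := 2) (by norm_num) ha ha1
  norm_num at this
  linarith

lemma one_lt_three_rpow {a : ℝ} (ha : 0 < a) : 1 < (3 : ℝ) ^ a :=
  one_lt_rpow (by norm_num) ha

lemma two_div_three_rpow_sub_one_pos {a : ℝ} (ha : 0 < a) : 0 < 2 / ((3 : ℝ) ^ a - 1) :=
  div_pos two_pos (sub_pos.2 (one_lt_three_rpow ha))

lemma rpow_chord_certificate {m δ K τ : ℝ} (hm0 : 0 ≤ m) (hm1 : m ≤ 1) (hK0 : 0 ≤ K) (hK2 : K ≤ 2)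
    (hτ0 : 0 ≤ τ) (hτ1 : τ ≤ 1) (hKδ : K * δ ≤ 2 * (1 - m)) :
    9 * K ^ 2 * ((1 - m) ^ 2 + 4 * m * τ * (δ + (1 - δ) * τ))
      ≤ 4 * (3 * (1 - m) + (2 * (K + 1) * m + K - 2) * τ) ^ 2 := by
  have hA : 0 ≤ (1 - m) * (12 * K * τ ^ 2 * (2 - K) * m) := by
    have : 0 ≤ 2 - K := by linarith
    have : 0 ≤ 1 - m := by linarith
    positivity
  have hB : 0 ≤ (1 - m) ^ 2 * ((2 - K) * (2 * (2 * τ - 3) ^ 2 + K * (9 - 4 * τ ^ 2))) := by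
    have : 0 ≤ 9 - 4 * τ ^ 2 := by nlinarith
    have : 0 ≤ 2 - K := by linarith
    positivity
  have hC : 0 ≤ 36 * K * τ * (1 - τ) * m * (2 * (1 - m) - K * δ) := by
    have : 0 ≤ 1 - τ := by linarith
    have : 0 ≤ 2 * (1 - m) - K * δ := by linarith
    positivity
  linear_combination hA + hB + hC

lemma rpow_chord_sq_le_normalized {a ρ τ : ℝ} (ha : 0 < a) (ha1 : a ≤ 1) (hρ : 0 < ρ) (hρ1 : ρ ≤ 1)
    (hτ0 : 0 ≤ τ) (hτ1 : τ ≤ 1) :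
    (1 - ρ ^ a) ^ 2 + 4 * ρ ^ a * τ * (1 - ρ + ρ * τ)
      ≤ (2 / (3 ^ a - 1)) ^ 2 * ((1 + 2 * ρ * τ) ^ a - ρ ^ a) ^ 2 := by
  set m := ρ ^ a
  set K := (3 : ℝ) ^ a - 1 with hK
  have hm0 : 0 ≤ m := by positivity
  have hm1 : m ≤ 1 := rpow_le_one hρ.le hρ1 ha.le
  have hK0 : 0 < K := by linarith [one_lt_three_rpow ha]
  have hK2a : K ≤ 2 * a := three_rpow_sub_one_le ha.le ha1
  have hKδ : K * (1 - ρ) ≤ 2 * (1 - m) := by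
    have hm : m ≤ 1 + a * (ρ - 1) := by
      simpa using rpow_one_add_le_one_add_mul_self (s := ρ - 1) (by linarith) ha.le ha1
    nlinarith [mul_le_mul_of_nonneg_right hK2a (sub_nonneg.2 hρ1)]
  have hconc := concaveOn_rpow ha.le ha1
  have h3ρ : (2 / 3) * (3 ^ a * m) + (1 / 3) * 3 ^ a ≤ (1 + 2 * ρ) ^ a := by
    have := hconc.2 (by simp; positivity : 3 * ρ ∈ Ici 0) (by simp : (3 : ℝ) ∈ Ici 0)
      (by norm_num : (0 : ℝ) ≤ 2 / 3) (by norm_num : (0 : ℝ) ≤ 1 / 3) (by norm_num)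
    simp only [smul_eq_mul, mul_rpow (by norm_num : (0:ℝ) ≤ 3) hρ.le] at this
    rwa [show 2 / 3 * (3 * ρ) + 1 / 3 * 3 = 1 + 2 * ρ by ring] at this
  have hτρ : (1 - τ) + τ * (1 + 2 * ρ) ^ a ≤ (1 + 2 * ρ * τ) ^ a := by
    have := hconc.2 (by simp : (1 : ℝ) ∈ Ici 0) (by simp; positivity : 1 + 2 * ρ ∈ Ici 0)
      (by linarith : 0 ≤ 1 - τ) hτ0 (by ring)
    simp only [smul_eq_mul, one_rpow] at this
    rw [show (1 - τ) * 1 + τ * (1 + 2 * ρ) = 1 + 2 * ρ * τ by ring] at this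
    linarith
  have hlower : 3 * (1 - m) + (2 * (K + 1) * m + K - 2) * τ ≤ 3 * ((1 + 2 * ρ * τ) ^ a - m) := by
    rw [hK]; linarith [mul_le_mul_of_nonneg_left h3ρ hτ0]
  have hlower0 : 0 ≤ 3 * (1 - m) + (2 * (K + 1) * m + K - 2) * τ := by
    nlinarith [mul_nonneg (mul_nonneg hK0.le hτ0) hm0]
  have hcert := rpow_chord_certificate hm0 hm1 hK0.le (by linarith) hτ0 hτ1 hKδ
  rw [div_pow, div_mul_eq_mul_div, le_div_iff₀ (by positivity)]
  nlinarith [pow_le_pow_left₀ hlower0 hlower 2]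

lemma rpow_chord_sq_le {a m n T : ℝ} (ha : 0 < a) (ha1 : a ≤ 1) (hm : 0 < m) (hmn : m ≤ n)
    (hT₁ : n - m ≤ T) (hT₂ : T ≤ n + m) :
    (m ^ a - n ^ a) ^ 2 + m ^ a / m * (n ^ a / n) * (T ^ 2 - (m - n) ^ 2)
      ≤ (2 / (3 ^ a - 1)) ^ 2 * ((m + T) ^ a - m ^ a) ^ 2 := by
  have hn : 0 < n := hm.trans_le hmn
  obtain ⟨ρ, hρ⟩ : ∃ ρ, ρ = m / n := ⟨_, rfl⟩
  obtain ⟨τ, hτ⟩ : ∃ τ, τ = (m + T - n) / (2 * m) := ⟨_, rfl⟩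
  have hρ0 : 0 < ρ := hρ ▸ div_pos hm hn
  have hm_eq : m = ρ * n := by rw [hρ]; field_simp
  have hT_eq : T = n * (1 + 2 * ρ * τ) - m := by rw [hρ, hτ]; field_simp; ring
  have hτ0 : 0 ≤ τ := hτ ▸ div_nonneg (by linarith) (by positivity)
  have key := rpow_chord_sq_le_normalized ha ha1 hρ0 (hρ ▸ (div_le_one hn).2 hmn) hτ0
    (hτ ▸ (div_le_one (by positivity)).2 (by linarith))
  have hma : m ^ a = ρ ^ a * n ^ a := by rw [hm_eq, mul_rpow hρ0.le hn.le]
  have hσa : (m + T) ^ a = n ^ a * (1 + 2 * ρ * τ) ^ a := by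
    rw [hT_eq, add_sub_cancel, mul_rpow hn.le (by positivity)]
  have hmid : m ^ a / m * (n ^ a / n) * (T ^ 2 - (m - n) ^ 2)
      = (n ^ a) ^ 2 * (4 * ρ ^ a * τ * (1 - ρ + ρ * τ)) := by
    rw [hT_eq, hma, hm_eq]
    field_simp
    ring
  rw [hmid, hσa, hma]
  nlinarith [mul_le_mul_of_nonneg_left key (sq_nonneg (n ^ a))]

lemma chord_sq_le_of_slope_le {p q Q r s t : ℝ} (hp : 0 ≤ p) (hpq : p ≤ q) (hqQ : q ≤ Q)
    (hr : 0 ≤ r) (hrs : r ≤ s) (hst : s ≤ r + t) :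
    (p * r - q * s) ^ 2 + p * q * (t ^ 2 - (r - s) ^ 2) ≤ (Q * (r + t) - p * r) ^ 2 := by
  have h₁ : q * (r + t - s) ≤ Q * (r + t) - q * s := by nlinarith
  have h₂ : p * (t + s - r) ≤ (Q * (r + t) - p * r) + (q * s - p * r) := by nlinarith
  nlinarith [mul_le_mul h₂ h₁ (by nlinarith) (by nlinarith)]

section RadialMap

variable {E : Type*} [NormedAddCommGroup E] [InnerProductSpace ℝ E]

noncomputable def radialMap (φ : ℝ → ℝ) (x : E) : E := (φ ‖x‖ / ‖x‖) • x

lemma norm_smul_sub_smul_sq (α β : ℝ) (x y : E) :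
    ‖α • x - β • y‖ ^ 2 = (α * ‖x‖ - β * ‖y‖) ^ 2 + α * β * (‖x - y‖ ^ 2 - (‖x‖ - ‖y‖) ^ 2) := by
  rw [norm_sub_sq_real, norm_sub_sq_real, norm_smul, norm_smul, real_inner_smul_left,
    real_inner_smul_right, Real.norm_eq_abs, Real.norm_eq_abs, mul_pow, mul_pow, sq_abs, sq_abs]
  ring

lemma norm_radialMap_sub_sq (φ : ℝ → ℝ) {x y : E} (hx : x ≠ 0) (hy : y ≠ 0) :
    ‖radialMap φ x - radialMap φ y‖ ^ 2 = (φ ‖x‖ - φ ‖y‖) ^ 2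
      + φ ‖x‖ / ‖x‖ * (φ ‖y‖ / ‖y‖) * (‖x - y‖ ^ 2 - (‖x‖ - ‖y‖) ^ 2) := by
  rw [radialMap, radialMap, norm_smul_sub_smul_sq, div_mul_cancel₀ _ (norm_ne_zero_iff.2 hx),
    div_mul_cancel₀ _ (norm_ne_zero_iff.2 hy)]

lemma norm_radialMap (φ : ℝ → ℝ) {x : E} (hx : x ≠ 0) : ‖radialMap φ x‖ = |φ ‖x‖| := by
  rw [radialMap, norm_smul, Real.norm_eq_abs, abs_div, abs_norm,
    div_mul_cancel₀ _ (norm_ne_zero_iff.2 hx)]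

lemma radialMap_neg (φ : ℝ → ℝ) (x : E) : radialMap φ (-x) = -radialMap φ x := by
  rw [radialMap, radialMap, norm_neg, smul_neg]

lemma radialMap_smul_of_pos (φ : ℝ → ℝ) {c : ℝ} (hc : 0 < c) {x : E} (hx : x ≠ 0) :
    radialMap φ (c • x) = (φ (c * ‖x‖) / ‖x‖) • x := by
  rw [radialMap, norm_smul, Real.norm_eq_abs, abs_of_pos hc, smul_smul]
  congr 1
  field_simp

lemma norm_radialMap_sub_radialMap_smul (φ : ℝ → ℝ) {c : ℝ} (hc : 0 < c) {x : E} (hx : x ≠ 0) :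
    ‖radialMap φ x - radialMap φ (c • x)‖ = |φ ‖x‖ - φ (c * ‖x‖)| := by
  rw [radialMap_smul_of_pos φ hc hx, radialMap, ← sub_smul, norm_smul, ← sub_div, Real.norm_eq_abs,
    abs_div, abs_norm, div_mul_cancel₀ _ (norm_ne_zero_iff.2 hx)]

lemma radialMap_radialMap (φ ψ : ℝ → ℝ) {x : E} (hx : x ≠ 0) (hψ : 0 < ψ ‖x‖) :
    radialMap φ (radialMap ψ x) = radialMap (fun r => φ (ψ r)) x := by
  have hn : ‖radialMap ψ x‖ = ψ ‖x‖ := by rw [norm_radialMap ψ hx, abs_of_pos hψ]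
  unfold radialMap at hn ⊢
  rw [hn, smul_smul]
  congr 1
  field_simp

variable {g : ℝ → ℝ}

lemma le_of_monotoneOn_div (hslope : MonotoneOn (fun r => g r / r) (Ioi 0))
    (hg : ∀ r, 0 < r → 0 < g r) {r s : ℝ} (hr : 0 < r) (hrs : r ≤ s) : g r ≤ g s := by
  have hs : 0 < s := hr.trans_le hrs
  have := hslope hr hs hrs
  simp only at this
  rw [div_le_div_iff₀ hr hs] at this
  nlinarith [hg r hr]

lemma norm_radialMap_add_norm_sub_le (hslope : MonotoneOn (fun r => g r / r) (Ioi 0))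
    (hg : ∀ r, 0 < r → 0 < g r) {x y : E} (hx : x ≠ 0) (hxy : ‖x‖ ≤ ‖y‖) :
    ‖radialMap g x‖ + ‖radialMap g x - radialMap g y‖ ≤ g (‖x‖ + ‖x - y‖) := by
  have hr : 0 < ‖x‖ := norm_pos_iff.2 hx
  have hy : y ≠ 0 := norm_pos_iff.1 (hr.trans_le hxy)
  have hs : 0 < ‖y‖ := norm_pos_iff.2 hy
  have hst : ‖y‖ ≤ ‖x‖ + ‖x - y‖ := by simpa [norm_sub_rev] using norm_le_norm_add_norm_sub' y x
  have hσ : 0 < ‖x‖ + ‖x - y‖ := by positivity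
  have hchord := chord_sq_le_of_slope_le (div_pos (hg _ hr) hr).le (hslope hr hs hxy)
    (hslope hs hσ hst) hr.le hxy hst
  rw [div_mul_cancel₀ _ hr.ne', div_mul_cancel₀ _ hs.ne', div_mul_cancel₀ _ hσ.ne'] at hchord
  have hmono := le_of_monotoneOn_div hslope hg hr (le_add_of_nonneg_right (norm_nonneg (x - y)))
  rw [norm_radialMap g hx, abs_of_pos (hg _ hr), ← le_sub_iff_add_le',
    ← sq_le_sq₀ (norm_nonneg _) (by linarith), norm_radialMap_sub_sq g hx hy]
  exact hchord

lemma norm_radialMap_rpow_sub_le {a : ℝ} (ha : 0 < a) (ha1 : a ≤ 1) {x y : E} (hx : x ≠ 0)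
    (hxy : ‖x‖ ≤ ‖y‖) :
    ‖radialMap (· ^ a) x - radialMap (· ^ a) y‖
      ≤ 2 / (3 ^ a - 1) * ((‖x‖ + ‖x - y‖) ^ a - ‖x‖ ^ a) := by
  have hr : 0 < ‖x‖ := norm_pos_iff.2 hx
  have hy : y ≠ 0 := norm_pos_iff.1 (hr.trans_le hxy)
  have hC := two_div_three_rpow_sub_one_pos ha
  have hmono : ‖x‖ ^ a ≤ (‖x‖ + ‖x - y‖) ^ a :=
    rpow_le_rpow hr.le (le_add_of_nonneg_right (norm_nonneg _)) ha.le
  rw [← sq_le_sq₀ (norm_nonneg _) (by nlinarith), norm_radialMap_sub_sq _ hx hy, mul_pow]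
  refine rpow_chord_sq_le ha ha1 hr hxy ?_ ?_
  · simpa [norm_sub_rev] using norm_sub_norm_le y x
  · simpa [add_comm] using norm_sub_le x y

lemma norm_radialMap_rpow_comp_sub_le {a : ℝ} (ha : 0 < a) (ha1 : a ≤ 1)
    (hslope : MonotoneOn (fun r => g r / r) (Ioi 0)) (hg : ∀ r, 0 < r → 0 < g r) {x y : E}
    (hx : x ≠ 0) (hxy : ‖x‖ ≤ ‖y‖) :
    ‖radialMap (fun r => g r ^ a) x - radialMap (fun r => g r ^ a) y‖
      ≤ 2 / (3 ^ a - 1) * (g (‖x‖ + ‖x - y‖) ^ a - g ‖x‖ ^ a) := by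
  have hr : 0 < ‖x‖ := norm_pos_iff.2 hx
  have hy : y ≠ 0 := norm_pos_iff.1 (hr.trans_le hxy)
  have hGx : ‖radialMap g x‖ = g ‖x‖ := by rw [norm_radialMap g hx, abs_of_pos (hg _ hr)]
  have hGy : ‖radialMap g y‖ = g ‖y‖ := by
    rw [norm_radialMap g hy, abs_of_pos (hg _ (hr.trans_le hxy))]
  have hGx0 : radialMap g x ≠ 0 := norm_pos_iff.1 (hGx ▸ hg _ hr)
  have hC := two_div_three_rpow_sub_one_pos ha
  rw [← radialMap_radialMap (· ^ a) g hx (hg _ hr),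
    ← radialMap_radialMap (· ^ a) g hy (hg _ (hr.trans_le hxy))]
  calc _ ≤ 2 / (3 ^ a - 1) * ((‖radialMap g x‖ + ‖radialMap g x - radialMap g y‖) ^ a
          - ‖radialMap g x‖ ^ a) :=
        norm_radialMap_rpow_sub_le ha ha1 hGx0
          (by rw [hGx, hGy]; exact le_of_monotoneOn_div hslope hg hr hxy)
    _ ≤ 2 / (3 ^ a - 1) * (g (‖x‖ + ‖x - y‖) ^ a - g ‖x‖ ^ a) := by
        have hstretch := norm_radialMap_add_norm_sub_le hslope hg hx hxy
        rw [hGx] at hstretch ⊢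
        exact mul_le_mul_of_nonneg_left (sub_le_sub_right
          (rpow_le_rpow (add_nonneg (hg _ hr).le (norm_nonneg _)) hstretch ha.le) _) hC.le

lemma norm_radialMap_rpow_comp_sub_ray {a t : ℝ} (ha : 0 ≤ a)
    (hslope : MonotoneOn (fun r => g r / r) (Ioi 0)) (hg : ∀ r, 0 < r → 0 < g r) {x : E}
    (hx : x ≠ 0) (ht : 0 ≤ t) :
    ‖radialMap (fun r => g r ^ a) x - radialMap (fun r => g r ^ a) (((‖x‖ + t) / ‖x‖) • x)‖
      = g (‖x‖ + t) ^ a - g ‖x‖ ^ a := by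
  have hr : 0 < ‖x‖ := norm_pos_iff.2 hx
  rw [norm_radialMap_sub_radialMap_smul _ (by positivity) hx, div_mul_cancel₀ _ hr.ne',
    abs_sub_comm,
    abs_of_nonneg (sub_nonneg.2 (rpow_le_rpow (hg _ hr).le
      (le_of_monotoneOn_div hslope hg hr (le_add_of_nonneg_right ht)) ha))]

end RadialMap

noncomputable def stretchProfile (a b r : ℝ) : ℝ := if r ≤ 1 then r else r ^ (b / a)

section StretchProfile

variable {a b : ℝ}

lemma stretchProfile_pos {r : ℝ} (hr : 0 < r) : 0 < stretchProfile a b r := by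
  unfold stretchProfile
  split_ifs
  exacts [hr, rpow_pos_of_pos hr _]

lemma monotoneOn_stretchProfile_div (ha : 0 < a) (hab : a ≤ b) :
    MonotoneOn (fun r => stretchProfile a b r / r) (Ioi 0) := by
  have hexp : 0 ≤ b / a - 1 := by rw [sub_nonneg, le_div_iff₀ ha]; linarith
  intro r hr s hs hrs
  simp only [stretchProfile, mem_Ioi] at hr hs ⊢
  split_ifs with hr1 hs1 hs1
  · rw [div_self hr.ne', div_self hs.ne']
  · rw [div_self hr.ne', ← rpow_sub_one hs.ne']
    exact one_le_rpow (by linarith) hexp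
  · linarith
  · rw [← rpow_sub_one hr.ne', ← rpow_sub_one hs.ne']
    exact rpow_le_rpow hr.le hrs hexp

lemma radialA_eq_radialMap {n : ℕ} (ha : 0 < a) :
    radialA n a b = radialMap (fun r => stretchProfile a b r ^ a) := by
  funext x
  rcases eq_or_ne x 0 with rfl | hx
  · simp [radialA, radialMap]
  have hr : 0 < ‖x‖ := norm_pos_iff.2 hx
  simp only [radialA, radialMap, stretchProfile]
  split_ifs
  · rw [rpow_sub_one hr.ne']
  · rw [← rpow_mul hr.le, div_mul_cancel₀ _ ha.ne', rpow_sub_one hr.ne']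

lemma norm_radialA_sub_le {n : ℕ} (ha : 0 < a) (ha1 : a ≤ 1) (hab : a ≤ b)
    {x y : EuclideanSpace ℝ (Fin n)} (hx : x ≠ 0) (hxy : ‖x‖ ≤ ‖y‖) :
    ‖radialA n a b x - radialA n a b y‖
      ≤ 2 / (3 ^ a - 1) * ‖radialA n a b x - radialA n a b (((‖x‖ + ‖x - y‖) / ‖x‖) • x)‖ := by
  have hslope := monotoneOn_stretchProfile_div ha hab
  rw [radialA_eq_radialMap ha,
    norm_radialMap_rpow_comp_sub_ray ha.le hslope (fun _ => stretchProfile_pos) hx (norm_nonneg _)]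
  exact norm_radialMap_rpow_comp_sub_le ha ha1 hslope (fun _ => stretchProfile_pos) hx hxy

lemma norm_radialA_sub_neg_div {n : ℕ} (ha : 0 < a) (hab : a ≤ b)
    {x : EuclideanSpace ℝ (Fin n)} (hx : ‖x‖ = 3⁻¹) :
    ‖radialA n a b x - radialA n a b (-x)‖
      / ‖radialA n a b x - radialA n a b (((‖x‖ + ‖x - -x‖) / ‖x‖) • x)‖ = 2 / (3 ^ a - 1) := by
  have hx0 : x ≠ 0 := norm_pos_iff.1 (by rw [hx]; norm_num)
  have hxx : ‖x - -x‖ = 2 / 3 := by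
    rw [sub_neg_eq_add, ← two_smul ℝ, norm_smul, hx]; norm_num
  have h3 : (1 : ℝ) < 3 ^ a := one_lt_three_rpow ha
  rw [radialA_eq_radialMap ha, radialMap_neg, sub_neg_eq_add, ← two_smul ℝ, norm_smul,
    norm_radialMap _ hx0, norm_radialMap_rpow_comp_sub_ray ha.le
      (monotoneOn_stretchProfile_div ha hab) (fun _ => stretchProfile_pos) hx0 (norm_nonneg _),
    hxx, hx]
  simp only [stretchProfile, show (3 : ℝ)⁻¹ + 2 / 3 = 1 by norm_num, if_pos le_rfl,
    if_pos (by norm_num : (3 : ℝ)⁻¹ ≤ 1), one_rpow, inv_rpow (by norm_num : (0 : ℝ) ≤ 3)]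
  rw [Real.norm_two, abs_of_pos (by positivity)]
  field_simp

end StretchProfile

theorem stmt_16 (n : ℕ) (hn : 2 ≤ n) (a b : ℝ) (ha : 0 < a) (ha1 : a ≤ 1) (hb : 1 ≤ b) :
    (∀ x y : EuclideanSpace ℝ (Fin n), x ≠ 0 → y ≠ 0 → ‖x‖ ≤ ‖y‖ → x ≠ y →
      ‖radialA n a b x - radialA n a b y‖ ≤
        (2 / (3 ^ a - 1)) *
          ‖radialA n a b x - radialA n a b (((‖x‖ + ‖x - y‖) / ‖x‖) • x)‖) ∧
    IsLUB {q : ℝ | ∃ x y : EuclideanSpace ℝ (Fin n), x ≠ 0 ∧ y ≠ 0 ∧ ‖x‖ ≤ ‖y‖ ∧ x ≠ y ∧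
        q = ‖radialA n a b x - radialA n a b y‖ /
          ‖radialA n a b x - radialA n a b (((‖x‖ + ‖x - y‖) / ‖x‖) • x)‖}
      (2 / (3 ^ a - 1)) := by
  have hab : a ≤ b := ha1.trans hb
  have hC := two_div_three_rpow_sub_one_pos ha
  refine ⟨fun x y hx _ hxy _ => norm_radialA_sub_le ha ha1 hab hx hxy,
    IsGreatest.isLUB ⟨?_, ?_⟩⟩
  · have : Nonempty (Fin n) := ⟨⟨0, by omega⟩⟩
    obtain ⟨x, hx⟩ := exists_norm_eq (EuclideanSpace ℝ (Fin n)) (by norm_num : (0 : ℝ) ≤ 3⁻¹)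
    have hx0 : x ≠ 0 := norm_pos_iff.1 (by rw [hx]; norm_num)
    have hx_ne : x ≠ -x := by
      rw [ne_eq, eq_neg_iff_add_eq_zero, ← two_smul ℝ, smul_eq_zero]; simpa using hx0
    exact ⟨x, -x, hx0, neg_ne_zero.2 hx0, (norm_neg x).ge, hx_ne,
      (norm_radialA_sub_neg_div ha hab hx).symm⟩
  · rintro q ⟨x, y, hx, -, hxy, -, rfl⟩
    -- this also covers a vanishing denominator, where the quotient is the junk value `0`
    exact div_le_of_le_mul₀ (norm_nonneg _) hC.le (norm_radialA_sub_le ha ha1 hab hx hxy)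
end

section
/- For p ∈ (0,1) and all x, y ∈ ℝⁿ, the p-angular distance satisfies ||x|^(p-1)·x - |y|^(p-1)·y| ≤ |𝒜(x) - 𝒜(y)|, where 𝒜(x) = |x|^(p-1)·x for |x| ≤ 1 and 𝒜(x) = |x|^(1/p - 1)·x for |x| > 1. -/
open Real RealInnerProductSpace Set

lemma norm_smul_sub_smul_le_of_le {E : Type*} [NormedAddCommGroup E] [InnerProductSpace ℝ E]
    {u v : E} {s t s' t' : ℝ} (hs : 0 ≤ s) (ht : 0 ≤ t) (hss' : s ≤ s') (htt' : t ≤ t')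
    (h : |s * ‖u‖ - t * ‖v‖| ≤ |s' * ‖u‖ - t' * ‖v‖|) :
    ‖s • u - t • v‖ ≤ ‖s' • u - t' • v‖ := by
  have expand : ∀ a b : ℝ, 0 ≤ a → 0 ≤ b →
      ‖a • u - b • v‖ ^ 2 = (a * ‖u‖ - b * ‖v‖) ^ 2 + 2 * (a * b) * (‖u‖ * ‖v‖ - ⟪u, v⟫) := by
    intro a b ha hb
    rw [norm_sub_sq_real, norm_smul, norm_smul, real_inner_smul_left, real_inner_smul_right,
      Real.norm_of_nonneg ha, Real.norm_of_nonneg hb]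
    ring
  have hcs : 0 ≤ ‖u‖ * ‖v‖ - ⟪u, v⟫ := sub_nonneg.2 (real_inner_le_norm u v)
  have hst : s * t ≤ s' * t' := mul_le_mul hss' htt' ht (hs.trans hss')
  rw [← sq_le_sq₀ (norm_nonneg _) (norm_nonneg _), expand s t hs ht,
    expand s' t' (hs.trans hss') (ht.trans htt')]
  have := sq_le_sq.2 h
  nlinarith [mul_le_mul_of_nonneg_right hst hcs]

lemma abs_sub_le_abs_sub_of_monotoneOn {f g : ℝ → ℝ} {S : Set ℝ} (hf : MonotoneOn f S)
    (hgf : MonotoneOn (g - f) S) {x y : ℝ} (hx : x ∈ S) (hy : y ∈ S) :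
    |f x - f y| ≤ |g x - g y| := by
  wlog hxy : x ≤ y generalizing x y
  · rw [abs_sub_comm, abs_sub_comm (g x)]
    exact this hy hx (le_of_not_ge hxy)
  have hf' := hf hx hy hxy
  have hgf' := hgf hx hy hxy
  simp only [Pi.sub_apply] at hgf'
  rw [abs_of_nonpos (by linarith), abs_of_nonpos (by linarith)]
  linarith

lemma rpow_sub_self_le_rpow_sub_self {c s t : ℝ} (hc : 1 ≤ c) (hs : 1 ≤ s) (hst : s ≤ t) :
    s ^ c - s ≤ t ^ c - t := by
  have factor : ∀ r : ℝ, 0 < r → r ^ c - r = r * (r ^ (c - 1) - 1) := fun r hr => by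
    rw [mul_sub, mul_one, mul_comm, ← rpow_add_one hr.ne', sub_add_cancel]
  rw [factor s (by linarith), factor t (by linarith)]
  apply mul_le_mul hst _ _ (by linarith)
  · exact sub_le_sub_right (rpow_le_rpow (by linarith) hst (by linarith)) 1
  · exact sub_nonneg.2 (one_le_rpow hs (by linarith))

lemma self_sub_rpow_le_self_sub_rpow {a s t : ℝ} (ha : a ≤ 1) (hs : 1 ≤ s) (hst : s ≤ t) :
    s - s ^ a ≤ t - t ^ a := by
  have factor : ∀ r : ℝ, 0 < r → r - r ^ a = r * (1 - r ^ (a - 1)) := fun r hr => by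
    rw [mul_sub, mul_one, mul_comm, ← rpow_add_one hr.ne', sub_add_cancel]
  rw [factor s (by linarith), factor t (by linarith)]
  apply mul_le_mul hst _ _ (by linarith)
  · exact sub_le_sub_left (rpow_le_rpow_of_nonpos (by linarith) hst (by linarith)) 1
  · exact sub_nonneg.2 (rpow_le_one_of_one_le_of_nonpos hs (by linarith))

lemma rpow_sub_one_mul_self {r a : ℝ} (hr : 0 ≤ r) (ha : a ≠ 0) : r ^ (a - 1) * r = r ^ a := by
  simpa using (rpow_add_one' hr (y := a - 1) (by simpa using ha)).symm

noncomputable def radialProfile (a b r : ℝ) : ℝ := if r ≤ 1 then r ^ a else r ^ b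

lemma radialA_eq_smul (n : ℕ) (a b : ℝ) (x : EuclideanSpace ℝ (Fin n)) :
    radialA n a b x = radialProfile (a - 1) (b - 1) ‖x‖ • x := by
  unfold radialA radialProfile
  split_ifs <;> rfl

lemma radialProfile_sub_one_mul_self {a b r : ℝ} (ha : a ≠ 0) (hb : b ≠ 0) (hr : 0 ≤ r) :
    radialProfile (a - 1) (b - 1) r * r = radialProfile a b r := by
  unfold radialProfile
  split_ifs
  exacts [rpow_sub_one_mul_self hr ha, rpow_sub_one_mul_self hr hb]

lemma rpow_le_radialProfile {a b r : ℝ} (hab : a ≤ b) : r ^ a ≤ radialProfile a b r := by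
  unfold radialProfile
  split_ifs with hr
  · exact le_rfl
  · exact rpow_le_rpow_of_exponent_le (le_of_not_ge hr) hab

lemma monotone_radialProfile_sub_rpow {a b : ℝ} (ha : a ≤ 1) (hb : 1 ≤ b) :
    Monotone (fun r => radialProfile a b r - r ^ a) := by
  intro r s hrs
  dsimp only [radialProfile]
  split_ifs with hr hs hs
  · simp only [sub_self, le_refl]
  · linarith [rpow_le_rpow_of_exponent_le (le_of_not_ge hs) (ha.trans hb)]
  · exact absurd (hrs.trans hs) hr
  · have hr1 : 1 ≤ r := le_of_not_ge hr
    linarith [rpow_sub_self_le_rpow_sub_self hb hr1 hrs,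
      self_sub_rpow_le_self_sub_rpow ha hr1 hrs]

lemma abs_rpow_sub_rpow_le_abs_radialProfile_sub {a b r s : ℝ} (ha0 : 0 ≤ a) (ha1 : a ≤ 1)
    (hb : 1 ≤ b) (hr : 0 ≤ r) (hs : 0 ≤ s) :
    |r ^ a - s ^ a| ≤ |radialProfile a b r - radialProfile a b s| :=
  abs_sub_le_abs_sub_of_monotoneOn (g := radialProfile a b)
    (fun _ hx _ _ hxy => rpow_le_rpow hx hxy ha0)
    ((monotone_radialProfile_sub_rpow ha1 hb).monotoneOn _) (mem_Ici.2 hr) (mem_Ici.2 hs)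

theorem stmt_17 (n : ℕ) (p : ℝ) (hp : p ∈ Set.Ioo (0:ℝ) 1)
    (x y : EuclideanSpace ℝ (Fin n)) :
    ‖(‖x‖ ^ (p - 1)) • x - (‖y‖ ^ (p - 1)) • y‖ ≤
      ‖radialA n p (1 / p) x - radialA n p (1 / p) y‖ := by
  obtain ⟨hp0, hp1⟩ := hp
  have hq : 1 ≤ 1 / p := by rw [le_div_iff₀ hp0]; linarith
  have hexp : p - 1 ≤ 1 / p - 1 := by linarith
  rw [radialA_eq_smul, radialA_eq_smul]
  refine norm_smul_sub_smul_le_of_le (by positivity) (by positivity)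
    (rpow_le_radialProfile hexp) (rpow_le_radialProfile hexp) ?_
  rw [rpow_sub_one_mul_self (norm_nonneg x) hp0.ne', rpow_sub_one_mul_self (norm_nonneg y) hp0.ne',
    radialProfile_sub_one_mul_self hp0.ne' (by positivity) (norm_nonneg x),
    radialProfile_sub_one_mul_self hp0.ne' (by positivity) (norm_nonneg y)]
  exact abs_rpow_sub_rpow_le_abs_radialProfile_sub hp0.le hp1.le hq (norm_nonneg x) (norm_nonneg y)
end
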